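/- arXiv:math/0506185 — 5 statements merged into one kernel-verified Lean document; each statement's English description precedes it below -/
import Mathlib

section
/- Let 𝔖 be an interval system on X, V, W, Z complete Hausdorff commutative topological groups, L : V × W → Z biadditive and continuous in its second variable, and μ : 𝔖 → W a measure. Suppose 𝖵 ⊆ V and 𝖹 ⊆ Z are additive cones (containing 0 and closed under addition), 𝖹 is topologically closed, and L(v, μ(E)) ∈ 𝖹 for every v ∈ 𝖵 and E ∈ 𝔖. If f : X → V is Lebesgue–McShane integrable and f(x) ∈ 𝖵 for every x ∈ X, then ∫L(f, μ) ∈ 𝖹. -/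
/-- A family `S` of subsets of `X` is an *interval system* if for all `A, B ∈ S` there exist
countable pairwise disjoint families `D₁, D₂ ⊆ S` with `⋃₀ D₁ = A \ B` and `⋃₀ D₂ = A ∩ B`. -/
def IsIntervalSystem {X : Type*} (S : Set (Set X)) : Prop :=
  ∀ A ∈ S, ∀ B ∈ S,
    (∃ D : Set (Set X), D ⊆ S ∧ D.Countable ∧ D.PairwiseDisjoint id ∧ ⋃₀ D = A \ B) ∧
    (∃ D : Set (Set X), D ⊆ S ∧ D.Countable ∧ D.PairwiseDisjoint id ∧ ⋃₀ D = A ∩ B)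

/-- A map `μ` defined on the sets of `X`, with values in a commutative topological group, is
a *measure* on the set system `S` if it is σ-additive on `S`: whenever a member `B` of `S`
is the union of a countable pairwise disjoint family `(A i)` of members of `S`, the net of
finite partial sums `∑ i ∈ Ξ, μ (A i)` (over finite `Ξ`, directed by inclusion) converges
to `μ B`, i.e. `HasSum (fun i => μ (A i)) (μ B)`. -/
def IsAddMeasure {X W : Type*} [AddCommMonoid W] [TopologicalSpace W]
    (S : Set (Set X)) (μ : Set X → W) : Prop :=
  ∀ (ι : Type) (A : ι → Set X) (B : Set X), Countable ι → B ∈ S →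
    (∀ i, A i ∈ S) → (Pairwise fun i j => Disjoint (A i) (A j)) →
    (⋃ i, A i) = B → HasSum (fun i => μ (A i)) (μ B)

/-- The value at `x` of the step function `∑ j, c j • χ_{E j}`. -/
noncomputable def stepVal {X V : Type*} [AddCommMonoid V] {n : ℕ}
    (c : Fin n → V) (E : Fin n → Set X) (x : X) : V :=
  ∑ j, (E j).indicator (fun _ => c j) x

/-- `A ⊆ V × X` is an *envelope* of sets in `V` with respect to the set system `S` if
(i) it contains the graph of some step function over `S`, and (ii) it has a countable
generating system `D ⊆ S`:  `A = (⋃ d ∈ D, A^d ×ˢ d) ∪ ({0} ×ˢ (X \ ⋃₀ D))`, where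
`A^d = {v | ∀ x ∈ d, (v, x) ∈ A}`. -/
def IsEnvelope {X V : Type*} [AddCommMonoid V] (S : Set (Set X)) (A : Set (V × X)) : Prop :=
  (∃ (n : ℕ) (c : Fin n → V) (E : Fin n → Set X),
      (∀ j, E j ∈ S) ∧ ∀ x, (stepVal c E x, x) ∈ A) ∧
  (∃ D : Set (Set X), D ⊆ S ∧ D.Countable ∧
      A = (⋃ d ∈ D, {v : V | ∀ x ∈ d, (v, x) ∈ A} ×ˢ d) ∪ (({0} : Set V) ×ˢ (⋃₀ D)ᶜ))

/-- The pre-integral `∫^p L(A, μ)` of an envelope: the closure of the set of all values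
`∑ j, L (c j) (μ (E j))` over step functions whose graph is contained in `A`. -/
def preIntegral {X V W Z : Type*} [AddCommMonoid V] [AddCommMonoid Z] [TopologicalSpace Z]
    (S : Set (Set X)) (L : V → W → Z) (μ : Set X → W) (A : Set (V × X)) : Set Z :=
  closure { z : Z | ∃ (n : ℕ) (c : Fin n → V) (E : Fin n → Set X),
    (∀ j, E j ∈ S) ∧ (∀ x, (stepVal c E x, x) ∈ A) ∧ z = ∑ j, L (c j) (μ (E j)) }

/-- `f : X → V` has Lebesgue–McShane integral `a` if for every neighborhood `T` of `0` in `Z`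
there is an envelope `A` containing the graph of `f` with `∫^p L(A, μ) ⊆ a + T`. -/
def HasLMIntegral {X V W Z : Type*} [AddCommMonoid V] [AddCommMonoid Z] [TopologicalSpace Z]
    (S : Set (Set X)) (L : V → W → Z) (μ : Set X → W) (f : X → V) (a : Z) : Prop :=
  ∀ T ∈ nhds (0 : Z), ∃ A : Set (V × X), IsEnvelope S A ∧ (∀ x, (f x, x) ∈ A) ∧
    preIntegral S L μ A ⊆ {z | ∃ t ∈ T, z = a + t}


/-!
Since `ZC` is closed, it suffices to find points of `ZC` arbitrarily close to the pre-integral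
of an envelope `A` of `f`. Fix a step function `s = ∑ c j • χ (E j)` under `A`. The interval
system splits `⋃ E j` into countably many disjoint pieces `q ∈ S`, each inside or disjoint from
every `E j` (so `s` is constant on `q`), and each carrying a constant section `{w q} ×ˢ q ⊆ A`
with `w q ∈ VC`: on pieces meeting `⋃₀ D` the value of `f` provides one, and off `⋃₀ D` the
envelope forces `s = 0`. By σ-additivity `∑ L (c j) (μ (E j)) = ∑' q, L (s|q) (μ q)`. Replacing
`s` by `w q` on a finite set `K` of pieces carrying almost all of this sum gives a step function
under `A` whose integral differs by little from `∑ q ∈ K, L (w q) (μ q) ∈ ZC`.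
-/
open Set Function Topology

section CountableDisjointUnion

variable {X : Type*}

/-- `IsIntervalSystem S` says exactly that `IsCountableDisjointUnion S (A \ B)` and
`IsCountableDisjointUnion S (A ∩ B)` hold for `A B ∈ S`. -/
def IsCountableDisjointUnion (G : Set (Set X)) (B : Set X) : Prop :=
  ∃ D ⊆ G, D.Countable ∧ D.PairwiseDisjoint id ∧ ⋃₀ D = B

namespace IsCountableDisjointUnion

variable {G G' : Set (Set X)} {B C : Set X}

theorem mono (h : IsCountableDisjointUnion G B) (hG : G ⊆ G') :
    IsCountableDisjointUnion G' B :=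
  let ⟨D, hDG, hc, hd, hu⟩ := h
  ⟨D, hDG.trans hG, hc, hd, hu⟩

theorem of_mem (hB : B ∈ G) : IsCountableDisjointUnion G B :=
  ⟨{B}, singleton_subset_iff.2 hB, countable_singleton B, pairwiseDisjoint_singleton _ _,
    sUnion_singleton B⟩

theorem empty : IsCountableDisjointUnion G ∅ :=
  ⟨∅, empty_subset G, countable_empty, pairwiseDisjoint_empty, sUnion_empty⟩

theorem inter_Iic (h : IsCountableDisjointUnion G B) : IsCountableDisjointUnion (G ∩ Iic B) B :=
  let ⟨D, hDG, hc, hd, hu⟩ := h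
  ⟨D, fun _ hp => ⟨hDG hp, hu ▸ subset_sUnion_of_mem hp⟩, hc, hd, hu⟩

theorem iUnion {ι : Type*} [Countable ι] {B : ι → Set X} (hB : Pairwise (Disjoint on B))
    (h : ∀ i, IsCountableDisjointUnion G (B i)) : IsCountableDisjointUnion G (⋃ i, B i) := by
  choose D hDG hc hd hu using h
  have hsub : ∀ i, ∀ p ∈ D i, p ⊆ B i := fun i _ hp => hu i ▸ subset_sUnion_of_mem hp
  refine ⟨⋃ i, D i, iUnion_subset hDG, countable_iUnion hc, ?_, by simp_rw [sUnion_iUnion, hu]⟩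
  intro p hp q hq hpq
  obtain ⟨i, hpi⟩ := mem_iUnion.1 hp
  obtain ⟨k, hqk⟩ := mem_iUnion.1 hq
  rcases eq_or_ne i k with rfl | hik
  · exact hd i hpi hqk hpq
  · exact (hB hik).mono (hsub i p hpi) (hsub k q hqk)

theorem union {B₁ B₂ : Set X} (h₁ : IsCountableDisjointUnion G B₁)
    (h₂ : IsCountableDisjointUnion G B₂) (hd : Disjoint B₁ B₂) :
    IsCountableDisjointUnion G (B₁ ∪ B₂) := by
  rw [union_eq_iUnion]
  exact IsCountableDisjointUnion.iUnion (pairwise_disjoint_on_bool.2 hd)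
    (Bool.forall_bool.2 ⟨h₂, h₁⟩)

theorem bind (h : IsCountableDisjointUnion G B)
    (hG : ∀ p ∈ G, IsCountableDisjointUnion G' p) : IsCountableDisjointUnion G' B := by
  obtain ⟨D, hDG, hc, hd, rfl⟩ := h
  have := hc.to_subtype
  rw [sUnion_eq_iUnion]
  exact IsCountableDisjointUnion.iUnion (fun p q hpq => hd p.2 q.2 (Subtype.coe_ne_coe.2 hpq))
    fun p => hG p (hDG p.2)

theorem inter_image (h : IsCountableDisjointUnion G B) (C : Set X) :
    IsCountableDisjointUnion ((· ∩ C) '' G) (B ∩ C) := by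
  obtain ⟨D, hDG, hc, hd, rfl⟩ := h
  refine ⟨(· ∩ C) '' D, image_mono hDG, hc.image _,
    hd.image_of_le fun _ => inter_subset_left, ?_⟩
  rw [sUnion_image, sUnion_eq_biUnion, iUnion₂_inter]

theorem inter_of_forall {S : Set (Set X)} (hG : IsLowerSet G)
    (h : IsCountableDisjointUnion (S ∩ G) B)
    (hC : ∀ p ∈ S, IsCountableDisjointUnion S (p ∩ C)) :
    IsCountableDisjointUnion (S ∩ G) (B ∩ C) :=
  (h.inter_image C).bind fun _ ⟨p, ⟨hpS, hpG⟩, hq⟩ => hq ▸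
    ((hC p hpS).inter_Iic.mono fun _ ⟨hrS, hr⟩ => ⟨hrS, hG (hr.trans inter_subset_left) hpG⟩)

end IsCountableDisjointUnion

namespace IsIntervalSystem

open IsCountableDisjointUnion

variable {S G : Set (Set X)} {B C : Set X}

theorem isCountableDisjointUnion_inter (hS : IsIntervalSystem S) (hG : IsLowerSet G)
    (h : IsCountableDisjointUnion (S ∩ G) B) (hC : C ∈ S) :
    IsCountableDisjointUnion (S ∩ G) (B ∩ C) :=
  h.inter_of_forall hG fun p hp => (hS p hp C hC).2

theorem isCountableDisjointUnion_diff (hS : IsIntervalSystem S) (hG : IsLowerSet G)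
    (h : IsCountableDisjointUnion (S ∩ G) B) (hC : C ∈ S) :
    IsCountableDisjointUnion (S ∩ G) (B \ C) :=
  h.inter_of_forall (C := Cᶜ) hG fun p hp => (hS p hp C hC).1

theorem isCountableDisjointUnion_split (hS : IsIntervalSystem S) (hG : IsLowerSet G)
    (h : IsCountableDisjointUnion (S ∩ G) B) (hC : C ∈ S) :
    IsCountableDisjointUnion (S ∩ G ∩ {P | P ⊆ C ∨ Disjoint P C}) B := by
  rw [← inter_union_sdiff B C]
  refine union ((hS.isCountableDisjointUnion_inter hG h hC).inter_Iic.mono ?_)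
    ((hS.isCountableDisjointUnion_diff hG h hC).inter_Iic.mono ?_) disjoint_sdiff_inter.symm
  · exact fun P ⟨hP, hPC⟩ => ⟨hP, Or.inl (hPC.trans inter_subset_right)⟩
  · exact fun P ⟨hP, hPC⟩ => ⟨hP, Or.inr (disjoint_sdiff_left.mono_left hPC)⟩

theorem isCountableDisjointUnion_refine (hS : IsIntervalSystem S) (hG : IsLowerSet G)
    (h : IsCountableDisjointUnion (S ∩ G) B) {ι : Type*} (E : ι → Set X) (s : Finset ι)
    (hE : ∀ j ∈ s, E j ∈ S) :
    IsCountableDisjointUnion (S ∩ G ∩ {P | ∀ j ∈ s, P ⊆ E j ∨ Disjoint P (E j)}) B := by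
  classical
  induction s using Finset.induction_on with
  | empty => exact h.mono fun P hP => ⟨hP, by simp⟩
  | insert j s _ ih =>
    have hG' : IsLowerSet (G ∩ {P | ∀ j ∈ s, P ⊆ E j ∨ Disjoint P (E j)}) :=
      hG.inter fun _ _ hP' hP k hk => (hP k hk).imp hP'.trans (Disjoint.mono_left hP')
    have hs := ih fun k hk => hE k (Finset.mem_insert_of_mem hk)
    rw [inter_assoc] at hs
    refine (hS.isCountableDisjointUnion_split hG' hs (hE j (Finset.mem_insert_self j s))).mono ?_
    rintro P ⟨⟨hPS, hPG, hPs⟩, hPj⟩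
    exact ⟨⟨hPS, hPG⟩, (Finset.forall_mem_insert _ _ _).2 ⟨hPj, hPs⟩⟩

theorem isCountableDisjointUnion_sUnion (hS : IsIntervalSystem S) (hG : IsLowerSet G)
    {D : Set (Set X)} (hD : D.Countable) (hDG : D ⊆ S ∩ G) :
    IsCountableDisjointUnion (S ∩ G) (⋃₀ D) := by
  rcases D.eq_empty_or_nonempty with rfl | hne
  · rw [sUnion_empty]
    exact empty
  obtain ⟨e, rfl⟩ := hD.exists_eq_range hne
  rw [sUnion_range, ← iUnion_disjointed]
  exact IsCountableDisjointUnion.iUnion (disjoint_disjointed e) fun m =>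
    Nat.disjointedRec (p := IsCountableDisjointUnion (S ∩ G))
      (fun _ i ht => hS.isCountableDisjointUnion_diff hG ht (hDG (mem_range_self i)).1)
      (of_mem (hDG (mem_range_self m)))

end IsIntervalSystem

end CountableDisjointUnion

section Integral

variable {X V W Z : Type*}

theorem Finset.sum_comp_equivFin_symm {ι M : Type*} [AddCommMonoid M] (K : Finset ι)
    (g : ι → M) : ∑ j, g (K.equivFin.symm j) = ∑ i ∈ K, g i :=
  (K.equivFin.symm.sum_comp fun i => g i).trans (K.sum_coe_sort g)

theorem IsAddMeasure.hasSum [AddCommMonoid W] [TopologicalSpace W] {S : Set (Set X)}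
    {μ : Set X → W} (hμ : IsAddMeasure S μ) {ι : Type*} [Countable ι] {P : ι → Set X}
    (hP : ∀ i, P i ∈ S) (hd : Pairwise (Disjoint on P)) (hU : ⋃ i, P i ∈ S) :
    HasSum (fun i => μ (P i)) (μ (⋃ i, P i)) := by
  -- `IsAddMeasure` only allows index types in `Type`
  let e := equivShrink.{0} ι
  have h := hμ (Shrink.{0} ι) (P ∘ e.symm) _ (Countable.of_equiv ι e) hU (fun i => hP _)
    (hd.comp_of_injective e.symm.injective) (e.symm.surjective.iUnion_comp P)
  exact e.symm.hasSum_iff.1 h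

noncomputable def stepCoeff [AddCommMonoid V] {n : ℕ} (c : Fin n → V) (E : Fin n → Set X)
    (q : Set X) : V :=
  ∑ j, {j | q ⊆ E j}.indicator c j

theorem stepVal_eq_stepCoeff [AddCommMonoid V] {n : ℕ} (c : Fin n → V) (E : Fin n → Set X)
    {q : Set X} (hq : ∀ j, q ⊆ E j ∨ Disjoint q (E j)) {x : X} (hx : x ∈ q) :
    stepVal c E x = stepCoeff c E q := by
  refine Finset.sum_congr rfl fun j _ => ?_
  rcases hq j with h | h
  · rw [indicator_of_mem (h hx), indicator_of_mem (show j ∈ {j | q ⊆ E j} from h)]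
  · rw [indicator_of_notMem (disjoint_left.1 h hx),
      indicator_of_notMem fun h' : q ⊆ E j => disjoint_left.1 h hx (h' hx)]

theorem IsAddMeasure.hasSum_stepCoeff [AddCommMonoid V] [AddCommMonoid W] [TopologicalSpace W]
    [AddCommMonoid Z] [TopologicalSpace Z] [ContinuousAdd Z] {S : Set (Set X)} {μ : Set X → W}
    (hμ : IsAddMeasure S μ) (L : V →+ W →+ Z) (hL : ∀ v, Continuous (L v)) {n : ℕ}
    (c : Fin n → V) {E : Fin n → Set X} (hE : ∀ j, E j ∈ S) {Q : Set (Set X)}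
    (hQc : Q.Countable) (hQS : Q ⊆ S) (hQd : Q.PairwiseDisjoint id)
    (hsub : ∀ q ∈ Q, ∀ j, q ⊆ E j ∨ Disjoint q (E j)) (hcov : ∀ j, E j ⊆ ⋃₀ Q) :
    HasSum (fun q : Q => L (stepCoeff c E q) (μ q)) (∑ j, L (c j) (μ (E j))) := by
  have := hQc.to_subtype
  have hj : ∀ j, HasSum ({q : Q | (q : Set X) ⊆ E j}.indicator fun q => L (c j) (μ q))
      (L (c j) (μ (E j))) := by
    intro j
    have hU : ⋃ q : {q : Q | (q : Set X) ⊆ E j}, (q : Set X) = E j := by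
      refine Subset.antisymm (iUnion_subset fun q => q.2) fun x hx => ?_
      obtain ⟨q, hq, hxq⟩ := hcov j hx
      have hqE : q ⊆ E j := (hsub q hq j).resolve_right fun h => disjoint_left.1 h hxq hx
      exact mem_iUnion.2 ⟨⟨⟨q, hq⟩, hqE⟩, hxq⟩
    rw [← hasSum_subtype_iff_indicator]
    have h := hμ.hasSum (P := fun q : {q : Q | (q : Set X) ⊆ E j} => (q : Set X))
      (fun q => hQS q.1.2)
      (fun q r hqr => hQd q.1.2 r.1.2 fun h => hqr (Subtype.ext (Subtype.ext h)))
      (hU.symm ▸ hE j)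
    rw [hU] at h
    exact h.map (L (c j)) (hL (c j))
  convert hasSum_sum fun j (_ : j ∈ Finset.univ) => hj j with q
  simp only [stepCoeff, map_sum, AddMonoidHom.finsetSum_apply]
  refine Finset.sum_congr rfl fun j _ => ?_
  by_cases h : (q : Set X) ⊆ E j <;> simp [indicator, h]

theorem sum_mem_preIntegral [AddCommMonoid V] [AddCommMonoid Z] [TopologicalSpace Z]
    {S : Set (Set X)} (L : V → W → Z) (μ : Set X → W) {A : Set (V × X)} {ι : Type*}
    (K : Finset ι) (c : ι → V) (E : ι → Set X) (hE : ∀ i ∈ K, E i ∈ S)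
    (hA : ∀ x, (∑ i ∈ K, (E i).indicator (fun _ => c i) x, x) ∈ A) :
    ∑ i ∈ K, L (c i) (μ (E i)) ∈ preIntegral S L μ A := by
  refine subset_closure ⟨K.card, fun j => c (K.equivFin.symm j), fun j => E (K.equivFin.symm j),
    fun j => hE _ (K.equivFin.symm j).2, fun x => ?_,
    (K.sum_comp_equivFin_symm fun i => L (c i) (μ (E i))).symm⟩
  rw [stepVal, K.sum_comp_equivFin_symm fun i => (E i).indicator (fun _ => c i) x]
  exact hA x

theorem mem_envelope_cases [Zero V] {A : Set (V × X)} {D : Set (Set X)}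
    (hA : A = (⋃ d ∈ D, {v : V | ∀ x ∈ d, (v, x) ∈ A} ×ˢ d) ∪ (({0} : Set V) ×ˢ (⋃₀ D)ᶜ))
    {v : V} {x : X} (h : (v, x) ∈ A) :
    (∃ d ∈ D, x ∈ d ∧ ∀ y ∈ d, (v, y) ∈ A) ∨ (x ∉ ⋃₀ D ∧ v = 0) := by
  rw [hA] at h
  rcases h with h | ⟨hv, hx⟩
  · simp only [mem_iUnion, mem_prod, mem_ofPred_eq] at h
    obtain ⟨d, hd, hdA, hxd⟩ := h
    exact Or.inl ⟨d, hd, hxd, hdA⟩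
  · exact Or.inr ⟨hx, hv⟩

theorem IsIntervalSystem.isCountableDisjointUnion_iUnion_subordinate {S : Set (Set X)}
    (hS : IsIntervalSystem S) {ι : Type*} [Fintype ι] {E : ι → Set X} (hE : ∀ j, E j ∈ S) :
    IsCountableDisjointUnion (S ∩ {P | ∀ j, P ⊆ E j ∨ Disjoint P (E j)}) (⋃ j, E j) := by
  have h := hS.isCountableDisjointUnion_sUnion isLowerSet_univ (countable_range E)
    (range_subset_iff.2 fun j => ⟨hE j, trivial⟩)
  rw [sUnion_range] at h
  exact (hS.isCountableDisjointUnion_refine isLowerSet_univ h E Finset.univ fun j _ => hE j).mono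
    fun P ⟨⟨hPS, _⟩, hP⟩ => ⟨hPS, fun j => hP j (Finset.mem_univ j)⟩

theorem IsIntervalSystem.isCountableDisjointUnion_of_envelope [AddCommMonoid V]
    {S : Set (Set X)} (hS : IsIntervalSystem S) {A : Set (V × X)} {D : Set (Set X)} (hDS : D ⊆ S)
    (hDc : D.Countable)
    (hA : A = (⋃ d ∈ D, {v : V | ∀ x ∈ d, (v, x) ∈ A} ×ˢ d) ∪ (({0} : Set V) ×ˢ (⋃₀ D)ᶜ))
    {n : ℕ} {c : Fin n → V} {E : Fin n → Set X} (hE : ∀ j, E j ∈ S)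
    (hcA : ∀ x, (stepVal c E x, x) ∈ A) {VC : Set V} (hV0 : 0 ∈ VC) {f : X → V}
    (hfA : ∀ x, (f x, x) ∈ A) (hfV : ∀ x, f x ∈ VC) :
    IsCountableDisjointUnion (S ∩ {P | ∃ w ∈ VC, ∀ x ∈ P, (w, x) ∈ A} ∩
      {P | ∀ j, P ⊆ E j ∨ Disjoint P (E j)}) (⋃ j, E j) := by
  set Good := {P : Set X | ∃ w ∈ VC, ∀ x ∈ P, (w, x) ∈ A}
  have hGood : IsLowerSet Good :=
    fun _ _ hP' ⟨w, hw, hwA⟩ => ⟨w, hw, fun x hx => hwA x (hP' hx)⟩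
  obtain ⟨Q, hQ, hQc, hQd, hQU⟩ := hS.isCountableDisjointUnion_iUnion_subordinate hE
  set C := {d ∈ D | d ∈ Good} ∪ {q ∈ Q | q ∈ Good}
  have hCS : C ⊆ S ∩ Good :=
    union_subset (fun d hd => ⟨hDS hd.1, hd.2⟩) fun q hq => ⟨(hQ hq.1).1, hq.2⟩
  have hCc : C.Countable := (hDc.mono (sep_subset _ _)).union (hQc.mono (sep_subset _ _))
  have hcover : ∀ q ∈ Q, q ⊆ ⋃₀ C := by
    intro q hq x hx
    rcases mem_envelope_cases hA (hfA x) with ⟨d, hd, hxd, hdA⟩ | ⟨hxD, -⟩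
    · exact ⟨d, Or.inl ⟨hd, f x, hfV x, hdA⟩, hxd⟩
    · -- off `⋃₀ D` the envelope only contains `0`, so the step function vanishes at `x`,
      -- hence on all of `q`
      have hs : stepVal c E x = 0 := ((mem_envelope_cases hA (hcA x)).resolve_left
        fun ⟨d, hd, hxd, _⟩ => hxD ⟨d, hd, hxd⟩).2
      refine ⟨q, Or.inr ⟨hq, 0, hV0, fun y hy => ?_⟩, hx⟩
      rw [← hs, stepVal_eq_stepCoeff c E (hQ hq).2 hx, ← stepVal_eq_stepCoeff c E (hQ hq).2 hy]
      exact hcA y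
  rw [← hQU]
  refine IsCountableDisjointUnion.bind ⟨Q, subset_rfl, hQc, hQd, rfl⟩ fun q hq => ?_
  have h := hS.isCountableDisjointUnion_inter hGood
    (hS.isCountableDisjointUnion_sUnion hGood hCc hCS) (hQ hq).1
  rw [inter_eq_right.2 (hcover q hq)] at h
  exact h.inter_Iic.mono fun r ⟨hr, hrq⟩ =>
    ⟨hr, fun j => ((hQ hq).2 j).imp hrq.trans (Disjoint.mono_left hrq)⟩

theorem add_sum_sub_mem_preIntegral [AddCommGroup V] [AddCommMonoid W] [AddCommGroup Z]
    [TopologicalSpace Z] {S : Set (Set X)} (L : V →+ W →+ Z) (μ : Set X → W)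
    {A : Set (V × X)} {n : ℕ} {c : Fin n → V} {E : Fin n → Set X} (hE : ∀ j, E j ∈ S)
    (hcA : ∀ x, (stepVal c E x, x) ∈ A) {Q : Set (Set X)} (hQS : Q ⊆ S)
    (hQd : Q.PairwiseDisjoint id) (hsub : ∀ q ∈ Q, ∀ j, q ⊆ E j ∨ Disjoint q (E j))
    (K : Finset Q) {w : Q → V} (hwA : ∀ q : Q, ∀ x ∈ (q : Set X), (w q, x) ∈ A) :
    ∑ j, L (c j) (μ (E j)) + ∑ q ∈ K, (L (w q) (μ q) - L (stepCoeff c E q) (μ q)) ∈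
      preIntegral S (fun v w => L v w) μ A := by
  have h := sum_mem_preIntegral (S := S) (A := A) (fun v w => L v w) μ (Finset.univ.disjSum K)
    (Sum.elim c fun q => w q - stepCoeff c E q) (Sum.elim E fun q => q) ?_ ?_
  · simpa only [Finset.sum_disjSum, Sum.elim_inl, Sum.elim_inr, map_sub,
      AddMonoidHom.sub_apply] using h
  · rintro (j | q) -
    exacts [hE j, hQS q.2]
  · intro x
    simp only [Finset.sum_disjSum, Sum.elim_inl, Sum.elim_inr]
    -- the new step function is `w q` on each `q ∈ K` and agrees with the old one elsewhere
    change (stepVal c E x + _, x) ∈ A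
    by_cases hx : ∃ q ∈ K, x ∈ (q : Set X)
    · obtain ⟨q, hqK, hxq⟩ := hx
      have hoff : ∀ r ∈ K, r ≠ q → x ∉ (r : Set X) := fun r _ hrq hxr =>
        disjoint_left.1 (hQd r.2 q.2 (Subtype.coe_ne_coe.2 hrq)) hxr hxq
      rw [Finset.sum_eq_single_of_mem q hqK fun r hr hrq => indicator_of_notMem (hoff r hr hrq) _,
        indicator_of_mem hxq, stepVal_eq_stepCoeff c E (hsub q q.2) hxq, add_sub_cancel]
      exact hwA q x hxq
    · simp only [not_exists, not_and] at hx
      rw [Finset.sum_eq_zero fun q hq => indicator_of_notMem (hx q hq) _, add_zero]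
      exact hcA x

theorem exists_sub_mem_of_isEnvelope [AddCommGroup V] [AddCommMonoid W] [TopologicalSpace W]
    [AddCommGroup Z] [TopologicalSpace Z] [IsTopologicalAddGroup Z] {S : Set (Set X)}
    (hS : IsIntervalSystem S) (L : V →+ W →+ Z) (hL : ∀ v, Continuous (L v)) {μ : Set X → W}
    (hμ : IsAddMeasure S μ) {VC : Set V} (hV0 : 0 ∈ VC) (ZC : AddSubmonoid Z)
    (hLZ : ∀ v ∈ VC, ∀ E ∈ S, L v (μ E) ∈ ZC) {A : Set (V × X)} (hA : IsEnvelope S A)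
    {f : X → V} (hfA : ∀ x, (f x, x) ∈ A) (hfV : ∀ x, f x ∈ VC) {U : Set Z} (hU : U ∈ 𝓝 0) :
    ∃ y ∈ preIntegral S (fun v w => L v w) μ A, ∃ z ∈ ZC, z - y ∈ U := by
  obtain ⟨⟨n, c, E, hE, hcA⟩, D, hDS, hDc, hAD⟩ := hA
  obtain ⟨Q, hQ, hQc, hQd, hQU⟩ :=
    hS.isCountableDisjointUnion_of_envelope hDS hDc hAD hE hcA hV0 hfA hfV
  have hsum := hμ.hasSum_stepCoeff L hL c hE hQc (fun q hq => (hQ hq).1.1) hQd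
    (fun q hq => (hQ hq).2) fun j => hQU ▸ subset_iUnion E j
  obtain ⟨K, hK⟩ := (hsum.eventually
    ((continuous_sub_right _).tendsto' _ 0 (sub_self _) hU)).exists
  choose w hwV hwA using fun q : Q => (hQ q.2).1.2
  refine ⟨_, add_sum_sub_mem_preIntegral L μ hE hcA (fun q hq => (hQ hq).1.1) hQd
    (fun q hq => (hQ hq).2) K hwA, ∑ q ∈ K, L (w q) (μ q),
    sum_mem fun q _ => hLZ _ (hwV q) _ (hQ q.2).1.1, ?_⟩
  convert hK using 1
  dsimp only
  rw [Finset.sum_sub_distrib]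
  abel

end Integral

theorem statement12_general {X V W Z : Type*}
    [AddCommGroup V]
    [AddCommGroup W] [UniformSpace W]
    [AddCommGroup Z] [UniformSpace Z] [IsUniformAddGroup Z]
    (S : Set (Set X)) (hS : IsIntervalSystem S)
    (L : V → W → Z)
    (hL1 : ∀ v₁ v₂ w, L (v₁ + v₂) w = L v₁ w + L v₂ w)
    (hL2 : ∀ v w₁ w₂, L v (w₁ + w₂) = L v w₁ + L v w₂)
    (hLc : ∀ v, Continuous fun w => L v w)
    (μ : Set X → W) (hμ : IsAddMeasure S μ)
    (VC : Set V) (ZC : Set Z)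
    (hV0 : (0 : V) ∈ VC)
    (hZ0 : (0 : Z) ∈ ZC) (hZadd : ∀ a ∈ ZC, ∀ b ∈ ZC, a + b ∈ ZC)
    (hZclosed : IsClosed ZC)
    (hLZ : ∀ v ∈ VC, ∀ E ∈ S, L v (μ E) ∈ ZC)
    (f : X → V) (a : Z) (hf : HasLMIntegral S L μ f a) (hfV : ∀ x, f x ∈ VC) :
    a ∈ ZC := by
  let Lh : V →+ W →+ Z := AddMonoidHom.mk' (fun v => AddMonoidHom.mk' (L v) (hL2 v))
    fun v₁ v₂ => AddMonoidHom.ext (hL1 v₁ v₂)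
  let ZCh : AddSubmonoid Z := ⟨⟨ZC, fun {a b} ha hb => hZadd a ha b hb⟩, hZ0⟩
  rw [← hZclosed.closure_eq, mem_closure_iff_nhds]
  intro N hN
  obtain ⟨T, hT, hTN⟩ :=
    exists_nhds_zero_half ((continuous_const_add a).tendsto' 0 a (add_zero a) hN)
  obtain ⟨A, hA, hfA, hAT⟩ := hf T hT
  obtain ⟨y, hy, z, hz, hzy⟩ :=
    exists_sub_mem_of_isEnvelope hS Lh hLc hμ hV0 ZCh hLZ hA hfA hfV hT
  obtain ⟨t, ht, rfl⟩ := hAT hy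
  refine ⟨z, ?_, hz⟩
  have h := hTN t ht _ hzy
  rwa [mem_preimage, ← add_assoc, add_sub_cancel] at h

/-- (Monotonicity.) Let `VC ⊆ V` and `ZC ⊆ Z` be additive cones (containing `0`
and closed under addition), with `ZC` topologically closed, such that `L v (μ E) ∈ ZC` for every
`v ∈ VC` and `E ∈ S`. If `f : X → V` is Lebesgue–McShane integrable with integral `a` and
`f x ∈ VC` for every `x`, then `a ∈ ZC`. -/
theorem statement12 {X V W Z : Type*}
    [AddCommGroup V] [UniformSpace V] [IsUniformAddGroup V] [CompleteSpace V] [T2Space V]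
    [AddCommGroup W] [UniformSpace W] [IsUniformAddGroup W] [CompleteSpace W] [T2Space W]
    [AddCommGroup Z] [UniformSpace Z] [IsUniformAddGroup Z] [CompleteSpace Z] [T2Space Z]
    (S : Set (Set X)) (hS : IsIntervalSystem S)
    (L : V → W → Z)
    (hL1 : ∀ v₁ v₂ w, L (v₁ + v₂) w = L v₁ w + L v₂ w)
    (hL2 : ∀ v w₁ w₂, L v (w₁ + w₂) = L v w₁ + L v w₂)
    (hLc : ∀ v, Continuous fun w => L v w)
    (μ : Set X → W) (hμ : IsAddMeasure S μ)
    (VC : Set V) (ZC : Set Z)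
    (hV0 : (0 : V) ∈ VC) (hVadd : ∀ a ∈ VC, ∀ b ∈ VC, a + b ∈ VC)
    (hZ0 : (0 : Z) ∈ ZC) (hZadd : ∀ a ∈ ZC, ∀ b ∈ ZC, a + b ∈ ZC)
    (hZclosed : IsClosed ZC)
    (hLZ : ∀ v ∈ VC, ∀ E ∈ S, L v (μ E) ∈ ZC)
    (f : X → V) (a : Z) (hf : HasLMIntegral S L μ f a) (hfV : ∀ x, f x ∈ VC) :
    a ∈ ZC :=
  statement12_general S hS L hL1 hL2 hLc μ hμ VC ZC hV0 hZ0 hZadd hZclosed hLZ f a hf hfV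
end

section
/- Let V be a complete Hausdorff commutative topological group. Let (C_λ)_{λ∈Λ} be a countable family of closed subsets of V, each containing 0, such that for every neighborhood T of 0 there exists a finite set Ξ ⊆ Λ with closure(∑_{λ∈Λ\Ξ} C_λ) ⊆ T, where for a family (B_λ) of subsets each containing 0, ∑_λ B_λ denotes the set of all sums ∑_λ b_λ with b_λ ∈ B_λ and b_λ = 0 for all but finitely many λ. Let (F_ω)_{ω∈Ω} be a countable family of closed subsets of V whose union contains a neighborhood U of 0 in V. Then there exist a finite set Ξ ⊆ Λ, an index ω ∈ Ω, and an element b ∈ ∑_{λ∈Ξ} C_λ such that b + closure(∑_{λ∈Λ\Ξ} C_λ) ⊆ F_ω; in particular closure(∑_{λ∈Λ\Ξ} C_λ) ⊆ F_ω − F_ω. -/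
/-!
Suppose no translate `b + closure (∑_{i ∉ Ξ} C i)` with `b ∈ ∑_{i ∈ Ξ} C i` fits inside a
single `F ω`. Since `F ω` is closed, any such "cell" then contains a smaller cell, indexed by a
larger finite set, that misses `F ω` entirely. Enumerating the pairs (finite set, index) and
refining cell after cell gives a nested sequence of cells whose tails shrink to `0`; their
base points form a Cauchy sequence, and its limit lies in the first cell, hence in `U`, but in
no `F ω`.
-/

open Pointwise

/-- The algebraic sum of the subfamily `(C i)_{i ∈ s}` of subsets of `V`: all sums `∑ i, b i`
with `b i ∈ C i` for `i ∈ s`, `b i = 0` for `i ∉ s`, and `b i = 0` for all but finitely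
many `i`. -/
def setSumOn {ι V : Type*} [AddCommMonoid V] (s : Set ι) (C : ι → Set V) : Set V :=
  { v : V | ∃ b : ι → V, (∀ i ∈ s, b i ∈ C i) ∧ (∀ i ∉ s, b i = 0) ∧
      (Function.support b).Finite ∧ v = ∑ᶠ i, b i }

open Filter Topology Set

section SetSumOn

variable {ι V : Type*} [AddCommMonoid V] {C : ι → Set V}

theorem zero_mem_setSumOn (hC0 : ∀ i, (0 : V) ∈ C i) (s : Set ι) : (0 : V) ∈ setSumOn s C :=
  ⟨0, fun i _ => hC0 i, fun _ _ => rfl, by simp, by simp⟩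

theorem add_mem_setSumOn_union {s t : Set ι} (hst : Disjoint s t) {x y : V}
    (hx : x ∈ setSumOn s C) (hy : y ∈ setSumOn t C) : x + y ∈ setSumOn (s ∪ t) C := by
  obtain ⟨b, hbs, hbs', hbfin, rfl⟩ := hx
  obtain ⟨c, hct, hct', hcfin, rfl⟩ := hy
  refine ⟨b + c, ?_, fun i hi => ?_, hbfin.union hcfin |>.subset (Function.support_add b c),
    finsum_add_distrib hbfin hcfin |>.symm⟩
  · rintro i (hi | hi)
    · simpa [hct' i (hst.notMem_of_mem_left hi)] using hbs i hi
    · simpa [hbs' i (hst.notMem_of_mem_right hi)] using hct i hi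
  · simp [hbs' i fun h => hi (.inl h), hct' i fun h => hi (.inr h)]

theorem setSumOn_coe_finset_subset_sum (Ξ : Finset ι) : setSumOn (↑Ξ : Set ι) C ⊆ ∑ i ∈ Ξ, C i := by
  rintro _ ⟨b, hbΞ, hbΞ', -, rfl⟩
  rw [finsum_eq_sum_of_support_subset b fun i hi => by_contra fun h => hi (hbΞ' i h)]
  exact finsetSum_mem_finsetSum Ξ C b hbΞ

end SetSumOn

section TailClosure

variable {ι V : Type*} [AddCommMonoid V] [TopologicalSpace V] {C : ι → Set V}

variable (C) in
def tailClosure (Ξ : Finset ι) : Set V :=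
  closure (setSumOn (↑Ξ : Set ι)ᶜ C)

theorem zero_mem_tailClosure (hC0 : ∀ i, (0 : V) ∈ C i) (Ξ : Finset ι) :
    (0 : V) ∈ tailClosure C Ξ :=
  subset_closure (zero_mem_setSumOn hC0 _)

variable [SeparatelyContinuousAdd V]

theorem add_mem_tailClosure {Ξ Ξ' : Finset ι} (hΞ : Ξ ⊆ Ξ') {w v : V}
    (hw : w ∈ setSumOn (↑Ξ' \ ↑Ξ) C) (hv : v ∈ tailClosure C Ξ') :
    w + v ∈ tailClosure C Ξ := by
  have hsplit : (↑Ξ' \ ↑Ξ) ∪ (↑Ξ' : Set ι)ᶜ = (↑Ξ : Set ι)ᶜ := by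
    ext i
    have := @hΞ i
    simp only [mem_union, Set.mem_sdiff, mem_compl_iff, Finset.mem_coe]
    tauto
  have himage : (w + ·) '' setSumOn (↑Ξ' : Set ι)ᶜ C ⊆ setSumOn (↑Ξ : Set ι)ᶜ C := by
    rintro _ ⟨u, hu, rfl⟩
    rw [← hsplit]
    exact add_mem_setSumOn_union (disjoint_compl_right.mono_left sdiff_subset) hw hu
  exact closure_mono himage <|
    image_closure_subset_closure_image (continuous_const_add w) ⟨v, hv, rfl⟩

theorem tailClosure_anti (hC0 : ∀ i, (0 : V) ∈ C i) : Antitone (tailClosure C) :=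
  fun _ _ hΞ v hv => by simpa using add_mem_tailClosure hΞ (zero_mem_setSumOn hC0 _) hv

variable (hC0 : ∀ i, (0 : V) ∈ C i)
  (hsmall : ∀ T ∈ 𝓝 (0 : V), ∃ Ξ : Finset ι, tailClosure C Ξ ⊆ T)
include hC0 hsmall

/-- Take `w` in the tail sum itself and inside `O`; a far enough tail then keeps `w + ·` in `O`. -/
theorem exists_add_tailClosure_subset_of_isOpen {O : Set V} (hO : IsOpen O) {Ξ : Finset ι}
    {v : V} (hvO : v ∈ O) (hv : v ∈ tailClosure C Ξ) (G : Finset ι) :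
    ∃ Ξ', Ξ ⊆ Ξ' ∧ G ⊆ Ξ' ∧ ∃ w ∈ setSumOn (↑Ξ' \ ↑Ξ) C, ∀ u ∈ tailClosure C Ξ', w + u ∈ O := by
  classical
  obtain ⟨_, hwO, b, hbΞ, hbΞ', hbfin, rfl⟩ := mem_closure_iff.1 hv O hO hvO
  obtain ⟨Ξw, hΞw⟩ := hsmall _ ((hO.preimage (continuous_const_add _)).mem_nhds (by simpa))
  refine ⟨Ξ ∪ G ∪ Ξw ∪ hbfin.toFinset, by grind, by grind,
    _, ⟨b, fun i hi => hbΞ i hi.2, fun i hi => ?_, hbfin, rfl⟩, fun u hu => ?_⟩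
  · by_cases hiΞ : i ∈ Ξ
    · exact hbΞ' i (by simpa using hiΞ)
    · by_contra hbi
      exact hi ⟨by simp [hbi], hiΞ⟩
  · exact hΞw (tailClosure_anti hC0 (by grind) hu)

theorem tendsto_tailClosure_smallSets {Ξ : ℕ → Finset ι} (hmono : Monotone Ξ)
    (hexhaust : ∀ Ξ' : Finset ι, ∃ n, Ξ' ⊆ Ξ n) :
    Tendsto (fun n => tailClosure C (Ξ n)) atTop (𝓝 0).smallSets := by
  refine tendsto_smallSets_iff.2 fun T hT => ?_
  obtain ⟨Ξ', hΞ'T⟩ := hsmall T hT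
  obtain ⟨N, hN⟩ := hexhaust Ξ'
  filter_upwards [eventually_ge_atTop N] with n hn
  exact (tailClosure_anti hC0 (hN.trans (hmono hn))).trans hΞ'T

end TailClosure

theorem exists_forall_sub_mem_of_nested {V : Type*} [AddCommGroup V] [UniformSpace V]
    [IsUniformAddGroup V] [CompleteSpace V] {s : ℕ → V} {K : ℕ → Set V}
    (hKcl : ∀ n, IsClosed (K n)) (hK0 : ∀ n, (0 : V) ∈ K n)
    (hKsmall : Tendsto K atTop (𝓝 0).smallSets)
    (hnest : ∀ n, ∀ v ∈ K (n + 1), s (n + 1) - s n + v ∈ K n) :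
    ∃ x, ∀ n, x - s n ∈ K n := by
  have hnest' : ∀ n m, n ≤ m → ∀ v ∈ K m, s m - s n + v ∈ K n := by
    intro n m hnm
    induction m, hnm using Nat.le_induction with
    | base => simp
    | succ m _ ih =>
      intro v hv
      convert ih _ (hnest m v hv) using 1
      abel
  have hsub : ∀ n m, n ≤ m → s m - s n ∈ K n := fun n m hnm => by
    simpa using hnest' n m hnm 0 (hK0 m)
  have hcauchy : CauchySeq s := by
    refine (IsUniformAddGroup.cauchy_map_iff_tendsto _ _).2 ⟨inferInstance, ?_⟩
    refine tendsto_def.2 fun T hT => ?_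
    obtain ⟨T', hT', hT'T⟩ := exists_nhds_half_neg hT
    obtain ⟨N, hN⟩ := eventually_atTop.1 (tendsto_smallSets_iff.1 hKsmall T' hT')
    filter_upwards [(eventually_ge_atTop N).prod_mk (eventually_ge_atTop N)] with p hp
    simpa using hT'T _ (hN N le_rfl (hsub N p.1 hp.1)) _ (hN N le_rfl (hsub N p.2 hp.2))
  obtain ⟨x, hx⟩ := cauchySeq_tendsto_of_complete hcauchy
  exact ⟨x, fun n => ((hKcl n).preimage (continuous_sub_right (s n))).mem_of_tendsto hx
    (eventually_atTop.2 ⟨n, hsub n⟩)⟩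

theorem exists_forall_sub_mem_tailClosure {ι V : Type*} [AddCommGroup V] [UniformSpace V]
    [IsUniformAddGroup V] [CompleteSpace V] {C : ι → Set V} (hC0 : ∀ i, (0 : V) ∈ C i)
    (hsmall : ∀ T ∈ 𝓝 (0 : V), ∃ Ξ : Finset ι, tailClosure C Ξ ⊆ T)
    {Ξ : ℕ → Finset ι} {s : ℕ → V} (hmono : Monotone Ξ)
    (hexhaust : ∀ Ξ' : Finset ι, ∃ n, Ξ' ⊆ Ξ n)
    (hdiff : ∀ n, s (n + 1) - s n ∈ setSumOn (↑(Ξ (n + 1)) \ ↑(Ξ n)) C) :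
    ∃ x, ∀ n, x - s n ∈ tailClosure C (Ξ n) :=
  exists_forall_sub_mem_of_nested (fun _ => isClosed_closure) (zero_mem_tailClosure hC0 <| Ξ ·)
    (tendsto_tailClosure_smallSets hC0 hsmall hmono hexhaust)
    fun n _ hv => add_mem_tailClosure (hmono n.le_succ) (hdiff n) hv

theorem exists_seq_setSumOn_refining {ι V : Type*} [AddCommMonoid V] {C : ι → Set V}
    (hC0 : ∀ i, (0 : V) ∈ C i) {P : ℕ → Finset ι → V → Prop} (Ξ₀ : Finset ι)
    (step : ∀ n (Ξ : Finset ι), ∀ s ∈ setSumOn (↑Ξ : Set ι) C,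
      ∃ Ξ' w, Ξ ⊆ Ξ' ∧ w ∈ setSumOn (↑Ξ' \ ↑Ξ) C ∧ P n Ξ' (s + w)) :
    ∃ (Ξ : ℕ → Finset ι) (s : ℕ → V), Ξ 0 = Ξ₀ ∧ s 0 = 0 ∧ ∀ n, Ξ n ⊆ Ξ (n + 1) ∧
      (∃ w ∈ setSumOn (↑(Ξ (n + 1)) \ ↑(Ξ n)) C, s (n + 1) = s n + w) ∧
      P n (Ξ (n + 1)) (s (n + 1)) := by
  choose! nextΞ nextw hsup hw hP using step
  let cell : ℕ → Finset ι × V :=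
    fun n => Nat.rec (Ξ₀, 0) (fun n p => (nextΞ n p.1 p.2, p.2 + nextw n p.1 p.2)) n
  have hmem : ∀ n, (cell n).2 ∈ setSumOn (↑(cell n).1 : Set ι) C := by
    intro n
    induction n with
    | zero => exact zero_mem_setSumOn hC0 _
    | succ n ih =>
      have hsplit : ↑(cell n).1 ∪ (↑(cell (n + 1)).1 \ ↑(cell n).1) =
          (↑(cell (n + 1)).1 : Set ι) :=
        union_sdiff_cancel (Finset.coe_subset.2 (hsup n _ _ ih))
      rw [← hsplit]
      exact add_mem_setSumOn_union disjoint_sdiff_right ih (hw n _ _ ih)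
  exact ⟨fun n => (cell n).1, fun n => (cell n).2, rfl, rfl, fun n =>
    ⟨hsup n _ _ (hmem n), ⟨_, hw n _ _ (hmem n), rfl⟩, hP n _ _ (hmem n)⟩⟩

theorem exists_add_tailClosure_subset_of_subset_iUnion {ι κ V : Type*} [AddCommGroup V]
    [UniformSpace V] [IsUniformAddGroup V] [CompleteSpace V] [Countable ι] [Countable κ]
    {C : ι → Set V} (hC0 : ∀ i, (0 : V) ∈ C i)
    (hsmall : ∀ T ∈ 𝓝 (0 : V), ∃ Ξ : Finset ι, tailClosure C Ξ ⊆ T)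
    {F : κ → Set V} (hFcl : ∀ ω, IsClosed (F ω)) {U : Set V} (hU : U ∈ 𝓝 0)
    (hUF : U ⊆ ⋃ ω, F ω) :
    ∃ (Ξ : Finset ι) (ω : κ), ∃ b ∈ setSumOn (↑Ξ : Set ι) C,
      ∀ v ∈ tailClosure C Ξ, b + v ∈ F ω := by
  by_contra! hne
  obtain ⟨ω₀, -⟩ := mem_iUnion.1 (hUF (mem_of_mem_nhds hU))
  have : Nonempty κ := ⟨ω₀⟩
  obtain ⟨e, he⟩ := exists_surjective_nat (Finset ι × κ)
  obtain ⟨Ξ₀, hΞ₀U⟩ := hsmall U hU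
  obtain ⟨Ξ, s, hΞ0, hs0, hseq⟩ := exists_seq_setSumOn_refining hC0 Ξ₀
    (P := fun n Ξ' s' => (e n).1 ⊆ Ξ' ∧ ∀ u ∈ tailClosure C Ξ', s' + u ∉ F (e n).2)
    fun n Ξ s hs => by
      obtain ⟨v, hv, hvF⟩ := hne Ξ (e n).2 s hs
      obtain ⟨Ξ', hΞΞ', heΞ', w, hw, hwO⟩ := exists_add_tailClosure_subset_of_isOpen hC0 hsmall
        ((hFcl _).isOpen_compl.preimage (continuous_const_add s)) hvF hv (e n).1
      exact ⟨Ξ', w, hΞΞ', hw, heΞ', fun u hu => by simpa [add_assoc] using hwO u hu⟩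
  choose hsup hdiff hP using hseq
  have hexhaust : ∀ Ξ' : Finset ι, ∃ n, Ξ' ⊆ Ξ n := fun Ξ' => by
    obtain ⟨n, hn⟩ := he (Ξ', ω₀)
    have hΞ' := (hP n).1
    rw [hn] at hΞ'
    exact ⟨n + 1, hΞ'⟩
  obtain ⟨x, hx⟩ := exists_forall_sub_mem_tailClosure (s := s) hC0 hsmall
    (monotone_nat_of_le_succ hsup) hexhaust fun n => by
      obtain ⟨w, hw, hsw⟩ := hdiff n
      rwa [hsw, add_sub_cancel_left]
  obtain ⟨ω, hxω⟩ := mem_iUnion.1 (hUF (hΞ₀U (by simpa [hΞ0, hs0] using hx 0)))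
  obtain ⟨n, hn⟩ := he (Ξ₀, ω)
  exact (hP n).2 _ (hx (n + 1)) (by simpa [hn] using hxω)

theorem statement15_general {V : Type*}
    [AddCommGroup V] [UniformSpace V] [IsUniformAddGroup V] [CompleteSpace V]
    (ι κ : Type*) [Countable ι] [Countable κ]
    (C : ι → Set V) (hC0 : ∀ i, (0 : V) ∈ C i)
    (hsmall : ∀ T ∈ nhds (0 : V), ∃ Ξ : Finset ι,
      closure (setSumOn ((↑Ξ : Set ι))ᶜ C) ⊆ T)
    (F : κ → Set V) (hFcl : ∀ ω, IsClosed (F ω))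
    (U : Set V) (hU : U ∈ nhds (0 : V)) (hUF : U ⊆ ⋃ ω, F ω) :
    ∃ (Ξ : Finset ι) (ω : κ) (b : V), b ∈ ∑ i ∈ Ξ, C i ∧
      (∀ v ∈ closure (setSumOn ((↑Ξ : Set ι))ᶜ C), b + v ∈ F ω) ∧
      closure (setSumOn ((↑Ξ : Set ι))ᶜ C) ⊆ F ω - F ω := by
  obtain ⟨Ξ, ω, b, hb, hbF⟩ :=
    exists_add_tailClosure_subset_of_subset_iUnion hC0 hsmall hFcl hU hUF
  refine ⟨Ξ, ω, b, setSumOn_coe_finset_subset_sum Ξ hb, hbF, fun v hv => ?_⟩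
  exact ⟨b + v, hbF v hv, b, by simpa using hbF 0 (zero_mem_tailClosure hC0 Ξ),
    add_sub_cancel_left b v⟩

/-- Let `V` be a complete Hausdorff commutative topological group, `(C i)` a
countable family of closed subsets of `V` containing `0` such that for every neighborhood `T`
of `0` there is a finite `Ξ` with `closure (∑_{i ∉ Ξ} C i) ⊆ T`, and `(F ω)` a countable family
of closed sets whose union contains a neighborhood `U` of `0`. Then there are a finite `Ξ`, an
index `ω` and `b ∈ ∑_{i ∈ Ξ} C i` with `b + closure (∑_{i ∉ Ξ} C i) ⊆ F ω`; in particular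
`closure (∑_{i ∉ Ξ} C i) ⊆ F ω - F ω`. -/
theorem statement15 {V : Type*}
    [AddCommGroup V] [UniformSpace V] [IsUniformAddGroup V] [CompleteSpace V] [T2Space V]
    (ι κ : Type*) [Countable ι] [Countable κ]
    (C : ι → Set V) (hCcl : ∀ i, IsClosed (C i)) (hC0 : ∀ i, (0 : V) ∈ C i)
    (hsmall : ∀ T ∈ nhds (0 : V), ∃ Ξ : Finset ι,
      closure (setSumOn ((↑Ξ : Set ι))ᶜ C) ⊆ T)
    (F : κ → Set V) (hFcl : ∀ ω, IsClosed (F ω))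
    (U : Set V) (hU : U ∈ nhds (0 : V)) (hUF : U ⊆ ⋃ ω, F ω) :
    ∃ (Ξ : Finset ι) (ω : κ) (b : V), b ∈ ∑ i ∈ Ξ, C i ∧
      (∀ v ∈ closure (setSumOn ((↑Ξ : Set ι))ᶜ C), b + v ∈ F ω) ∧
      closure (setSumOn ((↑Ξ : Set ι))ᶜ C) ⊆ F ω - F ω :=
  statement15_general ι κ C hC0 hsmall F hFcl U hU hUF
end

section
/- Let 𝔖 be an interval system on a set X and μ : 𝔖 → ℝ a measure which is locally bounded, i.e. for every A ∈ 𝔖 the set V(A) = { ∑_{j∈J} μ(A_j) : J finite, A_j ∈ 𝔖 pairwise disjoint, A_j ⊆ A } is bounded. Define, for A ∈ 𝔖, |μ|⁺(A) = sup { ∑_λ max(μ(A_λ), 0) : (A_λ)_{λ∈Λ} a countable pairwise disjoint family in 𝔖 with union A }, and |μ|⁻(A), |μ|(A) analogously using max(−μ(A_λ), 0) and |μ(A_λ)|. Then |μ|⁺, |μ|⁻, |μ| are finite-valued nonnegative measures on 𝔖, μ(A) = |μ|⁺(A) − |μ|⁻(A) and |μ|(A) = |μ|⁺(A) + |μ|⁻(A)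 for all A ∈ 𝔖, and moreover |μ|⁺(A) = sup V(A) and −|μ|⁻(A) = inf V(A). -/
open ENNReal

/-- The set of all finite sums `∑ j, μ (B j)` over finite pairwise disjoint families of
members of `S` contained in `A`. -/
def finDisjSums {X : Type*} (S : Set (Set X)) (μ : Set X → ℝ) (A : Set X) : Set ℝ :=
  { z : ℝ | ∃ (n : ℕ) (B : Fin n → Set X), (∀ j, B j ∈ S) ∧ (∀ j, B j ⊆ A) ∧
      (Pairwise fun i j => Disjoint (B i) (B j)) ∧ z = ∑ j, μ (B j) }

/-- The positive variation `|μ|⁺(A)`: the supremum over all countable pairwise disjoint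
decompositions `A = ⋃ i, B i` in `S` of `∑ i, max (μ (B i)) 0`, computed in `[0, ∞]`. -/
noncomputable def posVar {X : Type*} (S : Set (Set X)) (μ : Set X → ℝ) (A : Set X) : ℝ≥0∞ :=
  sSup { s : ℝ≥0∞ | ∃ (ι : Type) (_ : Countable ι) (B : ι → Set X), (∀ i, B i ∈ S) ∧
    (Pairwise fun i j => Disjoint (B i) (B j)) ∧ (⋃ i, B i) = A ∧
    s = ∑' i, ENNReal.ofReal (μ (B i)) }

/-- The negative variation `|μ|⁻(A)`: as `posVar`, with `max (-μ (B i)) 0`. -/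
noncomputable def negVar {X : Type*} (S : Set (Set X)) (μ : Set X → ℝ) (A : Set X) : ℝ≥0∞ :=
  sSup { s : ℝ≥0∞ | ∃ (ι : Type) (_ : Countable ι) (B : ι → Set X), (∀ i, B i ∈ S) ∧
    (Pairwise fun i j => Disjoint (B i) (B j)) ∧ (⋃ i, B i) = A ∧
    s = ∑' i, ENNReal.ofReal (-μ (B i)) }

/-- The total variation `|μ|(A)`: as `posVar`, with `|μ (B i)|`. -/
noncomputable def totVar {X : Type*} (S : Set (Set X)) (μ : Set X → ℝ) (A : Set X) : ℝ≥0∞ :=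
  sSup { s : ℝ≥0∞ | ∃ (ι : Type) (_ : Countable ι) (B : ι → Set X), (∀ i, B i ∈ S) ∧
    (Pairwise fun i j => Disjoint (B i) (B j)) ∧ (⋃ i, B i) = A ∧
    s = ∑' i, ENNReal.ofReal |μ (B i)| }


section Helpers
variable {X : Type*}

def pvSet (S : Set (Set X)) (f : Set X → ℝ) (A : Set X) : Set ℝ≥0∞ :=
  { s : ℝ≥0∞ | ∃ (ι : Type) (_ : Countable ι) (B : ι → Set X), (∀ i, B i ∈ S) ∧
    (Pairwise fun i j => Disjoint (B i) (B j)) ∧ (⋃ i, B i) = A ∧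
    s = ∑' i, ENNReal.ofReal (f (B i)) }

def CD (S : Set (Set X)) (T : Set X) : Prop :=
  ∃ (ι : Type) (_ : Countable ι) (D : ι → Set X), (∀ i, D i ∈ S) ∧
    (Pairwise fun i j => Disjoint (D i) (D j)) ∧ (⋃ i, D i) = T

lemma exists_equiv_type0 (ι : Type*) [Countable ι] :
    ∃ (ι' : Type) (_ : Countable ι'), Nonempty (ι' ≃ ι) := by
  obtain ⟨f, hf⟩ := exists_injective_nat ι
  exact ⟨Set.range f, inferInstance, ⟨(Equiv.ofInjective f hf).symm⟩⟩

lemma mem_pvSet {S : Set (Set X)} {f : Set X → ℝ} {A : Set X}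
    {ι : Type*} [Countable ι] {B : ι → Set X} (hB : ∀ i, B i ∈ S)
    (hd : Pairwise fun i j => Disjoint (B i) (B j)) (hu : (⋃ i, B i) = A) :
    (∑' i, ENNReal.ofReal (f (B i))) ∈ pvSet S f A := by
  obtain ⟨ι', _, ⟨e⟩⟩ := exists_equiv_type0 ι
  refine ⟨ι', ‹_›, B ∘ e, fun i => hB _, hd.comp_of_injective e.injective, ?_, ?_⟩
  · rw [← hu]; exact e.surjective.iSup_comp B
  · exact (e.tsum_eq fun i => ENNReal.ofReal (f (B i))).symm

lemma cd_of {S : Set (Set X)} {T : Set X}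
    {ι : Type*} [Countable ι] {D : ι → Set X} (hD : ∀ i, D i ∈ S)
    (hd : Pairwise fun i j => Disjoint (D i) (D j)) (hu : (⋃ i, D i) = T) :
    CD S T := by
  obtain ⟨ι', _, ⟨e⟩⟩ := exists_equiv_type0 ι
  refine ⟨ι', ‹_›, D ∘ e, fun i => hD _, hd.comp_of_injective e.injective, ?_⟩
  rw [← hu]; exact e.surjective.iSup_comp D

lemma cd_self {S : Set (Set X)} {A : Set X} (hA : A ∈ S) : CD S A :=
  cd_of (ι := Unit) (D := fun _ => A) (fun _ => hA)
    (Subsingleton.pairwise) (Set.iUnion_const A)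

lemma cd_diff {S : Set (Set X)} (hS : IsIntervalSystem S) {A B : Set X}
    (hA : A ∈ S) (hB : B ∈ S) : CD S (A \ B) := by
  obtain ⟨⟨D, hDS, hDc, hDd, hDu⟩, -⟩ := hS A hA B hB
  have : Countable ↥D := hDc.to_subtype
  refine cd_of (ι := ↥D) (D := fun d => (d : Set X)) (fun d => hDS d.2) ?_ ?_
  · exact fun i j hij => hDd i.2 j.2 (fun h => hij (Subtype.ext h))
  · rw [← hDu]; exact (Set.sUnion_eq_iUnion).symm

lemma cd_inter {S : Set (Set X)} (hS : IsIntervalSystem S) {A B : Set X}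
    (hA : A ∈ S) (hB : B ∈ S) : CD S (A ∩ B) := by
  obtain ⟨-, ⟨D, hDS, hDc, hDd, hDu⟩⟩ := hS A hA B hB
  have : Countable ↥D := hDc.to_subtype
  refine cd_of (ι := ↥D) (D := fun d => (d : Set X)) (fun d => hDS d.2) ?_ ?_
  · exact fun i j hij => hDd i.2 j.2 (fun h => hij (Subtype.ext h))
  · rw [← hDu]; exact (Set.sUnion_eq_iUnion).symm

lemma pairwise_sigma {ι : Type*} {κ : ι → Type*} {A : ι → Set X} {D : ∀ i, κ i → Set X}
    (hA : Pairwise fun i j => Disjoint (A i) (A j))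
    (hsub : ∀ i x, D i x ⊆ A i)
    (hD : ∀ i, Pairwise fun x y => Disjoint (D i x) (D i y)) :
    Pairwise fun (p q : Σ i, κ i) => Disjoint (D p.1 p.2) (D q.1 q.2) := by
  rintro ⟨i, x⟩ ⟨j, y⟩ hne
  rcases eq_or_ne i j with rfl | hij
  · exact hD i (by simpa using hne)
  · exact ((hA hij).mono (hsub i x) (hsub j y))

lemma cd_iUnion {S : Set (Set X)} {ι : Type*} [Countable ι] {A : ι → Set X}
    (hA : Pairwise fun i j => Disjoint (A i) (A j))
    (h : ∀ i, CD S (A i)) : CD S (⋃ i, A i) := by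
  choose κ hκ D hDS hDd hDu using h
  have : ∀ i, Countable (κ i) := hκ
  refine cd_of (ι := Σ i, κ i) (D := fun p => D p.1 p.2) (fun p => hDS p.1 p.2)
    (pairwise_sigma hA (fun i x => (hDu i) ▸ Set.subset_iUnion (D i) x) hDd) ?_
  rw [Set.iUnion_sigma]
  exact Set.iUnion_congr hDu

lemma cd_diff_of_cd {S : Set (Set X)} (hS : IsIntervalSystem S) {T B : Set X}
    (hT : CD S T) (hB : B ∈ S) : CD S (T \ B) := by
  obtain ⟨ι, _, D, hDS, hDd, hDu⟩ := hT
  have h : (T \ B) = ⋃ i, (D i \ B) := by rw [← hDu, Set.iUnion_diff]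
  rw [h]
  exact cd_iUnion (fun i j hij => (hDd hij).mono Set.diff_subset Set.diff_subset)
    (fun i => cd_diff hS (hDS i) hB)

lemma cd_diff_finset {S : Set (Set X)} (hS : IsIntervalSystem S) {T : Set X}
    (hT : CD S T) {ι : Type*} (t : Finset ι) (B : ι → Set X) (hB : ∀ i ∈ t, B i ∈ S) :
    CD S (T \ ⋃ i ∈ t, B i) := by
  classical
  induction t using Finset.induction_on with
  | empty => simpa using hT
  | @insert a t ha ih =>
    have h1 : T \ ⋃ i ∈ insert a t, B i = (T \ ⋃ i ∈ t, B i) \ B a := by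
      rw [Finset.set_biUnion_insert, Set.diff_diff, Set.union_comm]
    rw [h1]
    exact cd_diff_of_cd hS (ih fun i hi => hB i (Finset.mem_insert_of_mem hi))
      (hB a (Finset.mem_insert_self a t))
end Helpers

section Helpers2
variable {X : Type*} {S : Set (Set X)} {f : Set X → ℝ} {A : Set X}

lemma ofReal_finset_sum_le {κ : Type*} (t : Finset κ) (g : κ → ℝ) :
    ENNReal.ofReal (∑ x ∈ t, g x) ≤ ∑ x ∈ t, ENNReal.ofReal (g x) := by
  classical
  induction t using Finset.induction_on with
  | empty => simp
  | @insert a t ha ih =>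
    rw [Finset.sum_insert ha, Finset.sum_insert ha]
    exact le_trans (ENNReal.ofReal_add_le) (add_le_add le_rfl ih)

lemma zero_mem_finDisjSums : (0:ℝ) ∈ finDisjSums S f A :=
  ⟨0, fun j => j.elim0, fun j => j.elim0, fun j => j.elim0,
    Subsingleton.pairwise, by simp⟩

lemma finDisjSums_nonempty : (finDisjSums S f A).Nonempty := ⟨0, zero_mem_finDisjSums⟩

lemma sSup_finDisjSums_nonneg (h : BddAbove (finDisjSums S f A)) :
    0 ≤ sSup (finDisjSums S f A) := le_csSup h zero_mem_finDisjSums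

lemma finset_sum_mem_finDisjSums {κ : Type*} (t : Finset κ) (D : κ → Set X)
    (hDS : ∀ k ∈ t, D k ∈ S) (hsub : ∀ k ∈ t, D k ⊆ A)
    (hd : (t : Set κ).Pairwise fun i j => Disjoint (D i) (D j)) :
    (∑ k ∈ t, f (D k)) ∈ finDisjSums S f A := by
  classical
  refine ⟨Fintype.card ↥t, fun j => D ((Fintype.equivFin ↥t).symm j : κ),
    fun j => hDS _ ((Fintype.equivFin ↥t).symm j).2,
    fun j => hsub _ ((Fintype.equivFin ↥t).symm j).2, ?_, ?_⟩
  · intro i j hij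
    refine hd ((Fintype.equivFin ↥t).symm i).2 ((Fintype.equivFin ↥t).symm j).2 ?_
    intro h
    exact hij ((Fintype.equivFin ↥t).symm.injective (Subtype.ext h))
  · rw [Equiv.sum_comp (Fintype.equivFin ↥t).symm (fun x : ↥t => f (D ↑x))]
    exact (Finset.sum_coe_sort t fun k => f (D k)).symm

lemma pvSet_le_ofReal_sSup (hbdA : BddAbove (finDisjSums S f A)) :
    ∀ s ∈ pvSet S f A, s ≤ ENNReal.ofReal (sSup (finDisjSums S f A)) := by
  rintro s ⟨ι, _, B, hBS, hBd, hBu, rfl⟩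
  rw [ENNReal.tsum_eq_iSup_sum]
  refine iSup_le fun Ξ => ?_
  classical
  have h1 : ∑ i ∈ Ξ, ENNReal.ofReal (f (B i)) =
      ∑ i ∈ Ξ.filter (fun i => 0 ≤ f (B i)), ENNReal.ofReal (f (B i)) := by
    refine (Finset.sum_subset (Finset.filter_subset _ _) fun i hi hni => ?_).symm
    have : f (B i) ≤ 0 := by
      by_contra h
      push_neg at h
      exact hni (Finset.mem_filter.2 ⟨hi, h.le⟩)
    exact ENNReal.ofReal_eq_zero.2 this
  rw [h1, ← ENNReal.ofReal_sum_of_nonneg (fun i hi => (Finset.mem_filter.1 hi).2)]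
  refine ENNReal.ofReal_le_ofReal (le_csSup hbdA ?_)
  refine finset_sum_mem_finDisjSums _ B (fun k hk => hBS k) (fun k hk => hBu ▸ Set.subset_iUnion B k)
    fun i _ j _ hij => hBd hij

lemma exists_extension (hS : IsIntervalSystem S) (hA : A ∈ S) {n : ℕ} {B : Fin n → Set X}
    (hBS : ∀ j, B j ∈ S) (hBsub : ∀ j, B j ⊆ A)
    (hBd : Pairwise fun i j => Disjoint (B i) (B j)) :
    ∃ (κ : Type) (_ : Countable κ) (D : κ → Set X), (∀ k, D k ∈ S) ∧
      (Pairwise fun k l => Disjoint (D k) (D l)) ∧ (∀ k, D k ⊆ A) ∧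
      (∀ j k, Disjoint (B j) (D k)) ∧
      (Pairwise fun p q : Fin n ⊕ κ => Disjoint (Sum.elim B D p) (Sum.elim B D q)) ∧
      (⋃ e, Sum.elim B D e) = A := by
  have hcd : CD S (A \ ⋃ j ∈ (Finset.univ : Finset (Fin n)), B j) :=
    cd_diff_finset hS (cd_self hA) Finset.univ B (fun i _ => hBS i)
  rw [show (⋃ j ∈ (Finset.univ : Finset (Fin n)), B j) = ⋃ j, B j by simp] at hcd
  obtain ⟨κ, _, D, hDS, hDd, hDu⟩ := hcd
  have hDsub : ∀ k, D k ⊆ A \ ⋃ j, B j := fun k => hDu ▸ Set.subset_iUnion D k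
  have hBDdisj : ∀ j k, Disjoint (B j) (D k) := by
    intro j k
    rw [Set.disjoint_left]
    intro x hxB hxD
    exact (hDsub k hxD).2 (Set.mem_iUnion.2 ⟨j, hxB⟩)
  refine ⟨κ, ‹_›, D, hDS, hDd, fun k => (hDsub k).trans Set.diff_subset, hBDdisj, ?_, ?_⟩
  · rintro (i | k) (j | l) hne
    · exact hBd (fun h => hne (h ▸ rfl))
    · exact hBDdisj i l
    · exact (hBDdisj j k).symm
    · exact hDd (fun h => hne (h ▸ rfl))
  · rw [Set.iUnion_sum]
    simp only [Sum.elim_inl, Sum.elim_inr]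
    rw [hDu, Set.union_diff_cancel (Set.iUnion_subset hBsub)]

lemma ofReal_le_sSup_pvSet (hS : IsIntervalSystem S) (hA : A ∈ S) {z : ℝ}
    (hz : z ∈ finDisjSums S f A) : ENNReal.ofReal z ≤ sSup (pvSet S f A) := by
  obtain ⟨n, B, hBS, hBsub, hBd, rfl⟩ := hz
  obtain ⟨κ, _, D, hDS, hDd, hDsub, hBDdisj, hEd, hEu⟩ := exists_extension hS hA hBS hBsub hBd
  have hmem : (∑' e : Fin n ⊕ κ, ENNReal.ofReal (f (Sum.elim B D e))) ∈ pvSet S f A :=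
    mem_pvSet (fun e => by rcases e with i | k; exacts [hBS i, hDS k]) hEd hEu
  refine le_trans ?_ (le_sSup hmem)
  calc ENNReal.ofReal (∑ j, f (B j)) ≤ ∑ j, ENNReal.ofReal (f (B j)) :=
        ofReal_finset_sum_le _ _
    _ = ∑' j : Fin n, ENNReal.ofReal (f (Sum.elim B D (Sum.inl j))) := by
        rw [tsum_fintype]; rfl
    _ ≤ _ := ENNReal.tsum_comp_le_tsum_of_injective Sum.inl_injective _

end Helpers2

section Helpers3
variable {X : Type*} {S : Set (Set X)} {μ : Set X → ℝ} {A : Set X}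

lemma ofReal_max0 (x : ℝ) : ENNReal.ofReal (max x 0) = ENNReal.ofReal x := by
  rcases le_total x 0 with h | h
  · rw [max_eq_right h, ENNReal.ofReal_of_nonpos h]; simp
  · rw [max_eq_left h]

lemma ofReal_add_ofReal_neg (x : ℝ) :
    ENNReal.ofReal x + ENNReal.ofReal (-x) = ENNReal.ofReal |x| := by
  rcases le_total x 0 with h | h
  · rw [ENNReal.ofReal_of_nonpos h, abs_of_nonpos h, zero_add]
  · rw [ENNReal.ofReal_of_nonpos (neg_nonpos.2 h), abs_of_nonneg h, add_zero]

lemma pvSet_nonempty {f : Set X → ℝ} (hA : A ∈ S) : (pvSet S f A).Nonempty :=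
  ⟨_, mem_pvSet (ι := Unit) (B := fun _ => A) (fun _ => hA) Subsingleton.pairwise
    (Set.iUnion_const A)⟩

/-- σ-additivity refinement inequality: if `B₀ ∈ S` is decomposed into `(E k)`,
then `ofReal (μ B₀) ≤ ∑' k, ofReal (μ (E k))`. -/
lemma refine_le (hμ : IsAddMeasure S μ) {B₀ : Set X} (hB₀ : B₀ ∈ S)
    {κ : Type} [Countable κ] {E : κ → Set X} (hES : ∀ k, E k ∈ S)
    (hEd : Pairwise fun k l => Disjoint (E k) (E l)) (hEu : (⋃ k, E k) = B₀) :
    ENNReal.ofReal (μ B₀) ≤ ∑' k, ENNReal.ofReal (μ (E k)) := by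
  have hsum : HasSum (fun k => μ (E k)) (μ B₀) := hμ κ E B₀ ‹_› hB₀ hES hEd hEu
  have hmax : Summable (fun k => max (μ (E k)) 0) :=
    Summable.of_nonneg_of_le (fun k => le_max_right _ _)
      (fun k => max_le (le_abs_self _) (abs_nonneg _)) hsum.summable.abs
  have h1 : μ B₀ ≤ ∑' k, max (μ (E k)) 0 := by
    rw [← hsum.tsum_eq]
    exact Summable.tsum_le_tsum (fun k => le_max_left _ _) hsum.summable hmax
  calc ENNReal.ofReal (μ B₀) ≤ ENNReal.ofReal (∑' k, max (μ (E k)) 0) :=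
        ENNReal.ofReal_le_ofReal h1
    _ = ∑' k, ENNReal.ofReal (max (μ (E k)) 0) :=
        ENNReal.ofReal_tsum_of_nonneg (fun k => le_max_right _ _) hmax
    _ = ∑' k, ENNReal.ofReal (μ (E k)) := tsum_congr fun k => ofReal_max0 _

lemma exists_refinement (hS : IsIntervalSystem S)
    {ι ρ : Type} {B : ι → Set X} {C : ρ → Set X}
    (hBS : ∀ i, B i ∈ S) (hCS : ∀ j, C j ∈ S)
    (hBu : (⋃ i, B i) = A) (hCu : (⋃ j, C j) = A) :
    ∃ (κ : ι → ρ → Type) (_ : ∀ i j, Countable (κ i j)) (F : ∀ i j, κ i j → Set X),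
      (∀ i j x, F i j x ∈ S) ∧ (∀ i j x, F i j x ⊆ B i ∩ C j) ∧
      (∀ i j, Pairwise fun x y => Disjoint (F i j x) (F i j y)) ∧
      (∀ i, (⋃ (j) (x), F i j x) = B i) ∧ (∀ j, (⋃ (i) (x), F i j x) = C j) := by
  have h : ∀ i j, CD S (B i ∩ C j) := fun i j => cd_inter hS (hBS i) (hCS j)
  choose κ hκ F hFS hFd hFu using h
  have hsub : ∀ i j x, F i j x ⊆ B i ∩ C j := fun i j x => (hFu i j) ▸ Set.subset_iUnion _ x
  refine ⟨κ, hκ, F, hFS, hsub, hFd, fun i => ?_, fun j => ?_⟩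
  · calc (⋃ (j) (x), F i j x) = ⋃ j, B i ∩ C j := Set.iUnion_congr fun j => hFu i j
      _ = B i ∩ ⋃ j, C j := (Set.inter_iUnion _ _).symm
      _ = B i := by rw [hCu]; exact Set.inter_eq_left.2 (hBu ▸ Set.subset_iUnion B i)
  · calc (⋃ (i) (x), F i j x) = ⋃ i, B i ∩ C j := Set.iUnion_congr fun i => hFu i j
      _ = (⋃ i, B i) ∩ C j := by rw [Set.iUnion_inter]
      _ = C j := by rw [hBu]; exact Set.inter_eq_right.2 (hCu ▸ Set.subset_iUnion C j)

end Helpers3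

section Helpers4
variable {X : Type*} {S : Set (Set X)} {μ : Set X → ℝ} {A : Set X}

lemma neg_isAddMeasure (hμ : IsAddMeasure S μ) : IsAddMeasure S (fun B => -μ B) :=
  fun ι A B hc hB hA hd hu => (hμ ι A B hc hB hA hd hu).neg

lemma tsum_ofReal_le_sum_sSup (hS : IsIntervalSystem S) (hμ : IsAddMeasure S μ)
    {ι ρ : Type} [Countable ι] [Countable ρ] {B : ι → Set X} {C : ρ → Set X}
    (hBS : ∀ i, B i ∈ S) (hCS : ∀ j, C j ∈ S)
    (hBd : Pairwise fun i j => Disjoint (B i) (B j))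
    (hCd : Pairwise fun i j => Disjoint (C i) (C j))
    (heq : (⋃ i, B i) = ⋃ j, C j) :
    ∑' i, ENNReal.ofReal (μ (B i)) ≤ ∑' j, sSup (pvSet S μ (C j)) := by
  obtain ⟨κ, hκ, F, hFS, hsub, hFd, hFuB, hFuC⟩ :=
    exists_refinement (A := ⋃ i, B i) hS hBS hCS rfl heq.symm
  have : ∀ i j, Countable (κ i j) := hκ
  have step1 : ∀ i, ENNReal.ofReal (μ (B i)) ≤
      ∑' (p : Σ j, κ i j), ENNReal.ofReal (μ (F i p.1 p.2)) := by
    intro i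
    refine refine_le hμ (hBS i) (fun p => hFS i p.1 p.2) ?_ ?_
    · exact pairwise_sigma hCd (fun j x => (hsub i j x).trans Set.inter_subset_right) (hFd i)
    · rw [Set.iUnion_sigma]; exact hFuB i
  calc ∑' i, ENNReal.ofReal (μ (B i))
      ≤ ∑' i, ∑' (p : Σ j, κ i j), ENNReal.ofReal (μ (F i p.1 p.2)) :=
        ENNReal.tsum_le_tsum step1
    _ = ∑' i, ∑' j, ∑' x, ENNReal.ofReal (μ (F i j x)) :=
        tsum_congr fun i => ENNReal.tsum_sigma (fun j x => ENNReal.ofReal (μ (F i j x)))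
    _ = ∑' j, ∑' i, ∑' x, ENNReal.ofReal (μ (F i j x)) := ENNReal.tsum_comm
    _ = ∑' j, ∑' (q : Σ i, κ i j), ENNReal.ofReal (μ (F q.1 j q.2)) :=
        tsum_congr fun j => (ENNReal.tsum_sigma fun i x => ENNReal.ofReal (μ (F i j x))).symm
    _ ≤ ∑' j, sSup (pvSet S μ (C j)) := by
        refine ENNReal.tsum_le_tsum fun j => le_sSup ?_
        refine mem_pvSet (fun q => hFS q.1 j q.2) ?_ ?_
        · exact pairwise_sigma hBd (fun i x => (hsub i j x).trans Set.inter_subset_left)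
            (fun i => hFd i j)
        · rw [Set.iUnion_sigma]; exact hFuC j

lemma sSup_add_sSup_le_tot (hS : IsIntervalSystem S) (hμ : IsAddMeasure S μ) (hA : A ∈ S) :
    sSup (pvSet S μ A) + sSup (pvSet S (fun B => -μ B) A) ≤
      sSup (pvSet S (fun B => |μ B|) A) := by
  rw [sSup_eq_iSup, sSup_eq_iSup]
  refine ENNReal.biSup_add_biSup_le' (pvSet_nonempty hA) (pvSet_nonempty hA) ?_
  rintro p ⟨ι, _, B, hBS, hBd, hBu, rfl⟩ q ⟨ρ, _, C, hCS, hCd, hCu, rfl⟩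
  obtain ⟨κ, hκ, F, hFS, hsub, hFd, hFuB, hFuC⟩ :=
    exists_refinement (A := A) hS hBS hCS hBu hCu
  have : ∀ i j, Countable (κ i j) := hκ
  -- the common refinement, as a decomposition of A
  have hGd : Pairwise fun p q : Σ i, Σ j, κ i j =>
      Disjoint (F p.1 p.2.1 p.2.2) (F q.1 q.2.1 q.2.2) := by
    refine pairwise_sigma (D := fun i (p : Σ j, κ i j) => F i p.1 p.2) hBd ?_ ?_
    · intro i p
      exact (hsub i p.1 p.2).trans Set.inter_subset_left
    · intro i
      exact pairwise_sigma hCd (fun j x => (hsub i j x).trans Set.inter_subset_right) (hFd i)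
  have hGu : (⋃ t : Σ i, Σ j, κ i j, F t.1 t.2.1 t.2.2) = A := by
    rw [Set.iUnion_sigma]
    rw [← hBu]
    refine Set.iUnion_congr fun i => ?_
    rw [Set.iUnion_sigma]
    exact hFuB i
  have hp : ∑' i, ENNReal.ofReal (μ (B i)) ≤
      ∑' t : Σ i, Σ j, κ i j, ENNReal.ofReal (μ (F t.1 t.2.1 t.2.2)) := by
    rw [ENNReal.tsum_sigma']
    refine ENNReal.tsum_le_tsum fun i => ?_
    refine refine_le hμ (hBS i) (fun p => hFS i p.1 p.2) ?_ ?_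
    · exact pairwise_sigma hCd (fun j x => (hsub i j x).trans Set.inter_subset_right) (hFd i)
    · rw [Set.iUnion_sigma]; exact hFuB i
  have hq : ∑' j, ENNReal.ofReal (-μ (C j)) ≤
      ∑' t : Σ i, Σ j, κ i j, ENNReal.ofReal (-μ (F t.1 t.2.1 t.2.2)) := by
    have step : ∀ j, ENNReal.ofReal (-μ (C j)) ≤
        ∑' (q : Σ i, κ i j), ENNReal.ofReal (-μ (F q.1 j q.2)) := by
      intro j
      refine refine_le (neg_isAddMeasure hμ) (hCS j) (fun q => hFS q.1 j q.2) ?_ ?_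
      · exact pairwise_sigma hBd (fun i x => (hsub i j x).trans Set.inter_subset_left)
          (fun i => hFd i j)
      · rw [Set.iUnion_sigma]; exact hFuC j
    calc ∑' j, ENNReal.ofReal (-μ (C j))
        ≤ ∑' j, ∑' (q : Σ i, κ i j), ENNReal.ofReal (-μ (F q.1 j q.2)) :=
          ENNReal.tsum_le_tsum step
      _ = ∑' j, ∑' i, ∑' x, ENNReal.ofReal (-μ (F i j x)) :=
          tsum_congr fun j => ENNReal.tsum_sigma (fun i x => ENNReal.ofReal (-μ (F i j x)))
      _ = ∑' i, ∑' j, ∑' x, ENNReal.ofReal (-μ (F i j x)) := ENNReal.tsum_comm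
      _ = _ := by
          rw [ENNReal.tsum_sigma']
          exact tsum_congr fun i => (ENNReal.tsum_sigma (fun j x => ENNReal.ofReal (-μ (F i j x)))).symm
  calc (∑' i, ENNReal.ofReal (μ (B i))) + ∑' j, ENNReal.ofReal (-μ (C j))
      ≤ (∑' t : Σ i, Σ j, κ i j, ENNReal.ofReal (μ (F t.1 t.2.1 t.2.2))) +
        ∑' t : Σ i, Σ j, κ i j, ENNReal.ofReal (-μ (F t.1 t.2.1 t.2.2)) := add_le_add hp hq
    _ = ∑' t : Σ i, Σ j, κ i j, ENNReal.ofReal |μ (F t.1 t.2.1 t.2.2)| := by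
        rw [← ENNReal.tsum_add]
        exact tsum_congr fun t => ofReal_add_ofReal_neg _
    _ ≤ sSup (pvSet S (fun B => |μ B|) A) :=
        le_sSup (mem_pvSet (f := fun B => |μ B|) (fun t => hFS t.1 t.2.1 t.2.2) hGd hGu)

end Helpers4

section Helpers5
variable {X : Type*} {S : Set (Set X)} {μ : Set X → ℝ} {A : Set X}

lemma exists_compl_hasSum (hS : IsIntervalSystem S) (hμ : IsAddMeasure S μ) (hA : A ∈ S)
    {n : ℕ} {B : Fin n → Set X} (hBS : ∀ j, B j ∈ S) (hBsub : ∀ j, B j ⊆ A)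
    (hBd : Pairwise fun i j => Disjoint (B i) (B j)) :
    ∃ (κ : Type) (_ : Countable κ) (D : κ → Set X), (∀ k, D k ∈ S) ∧ (∀ k, D k ⊆ A) ∧
      (Pairwise fun k l => Disjoint (D k) (D l)) ∧
      HasSum (fun k => μ (D k)) (μ A - ∑ j, μ (B j)) := by
  obtain ⟨κ, _, D, hDS, hDd, hDsub, hBD, hEd, hEu⟩ := exists_extension hS hA hBS hBsub hBd
  have hsum : HasSum (fun e : Fin n ⊕ κ => μ (Sum.elim B D e)) (μ A) :=
    hμ _ _ A inferInstance hA (fun e => by rcases e with i | k; exacts [hBS i, hDS k]) hEd hEu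
  obtain ⟨w, hw⟩ : Summable (fun k => μ (D k)) :=
    hsum.summable.comp_injective Sum.inr_injective
  have hz : HasSum (fun j : Fin n => μ (B j)) (∑ j, μ (B j)) := hasSum_fintype _
  have hsum2 : HasSum (fun e : Fin n ⊕ κ => μ (Sum.elim B D e)) ((∑ j, μ (B j)) + w) := by
    refine HasSum.add_isCompl Set.isCompl_range_inl_range_inr ?_ ?_
    · exact (Equiv.ofInjective Sum.inl Sum.inl_injective).hasSum_iff.1 hz
    · exact (Equiv.ofInjective Sum.inr Sum.inr_injective).hasSum_iff.1 hw
  have : μ A = (∑ j, μ (B j)) + w := hsum.unique hsum2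
  refine ⟨κ, ‹_›, D, hDS, hDsub, hDd, ?_⟩
  have : w = μ A - ∑ j, μ (B j) := by linarith
  exact this ▸ hw

lemma sSup_add_sInf_finDisjSums (hS : IsIntervalSystem S) (hμ : IsAddMeasure S μ)
    (hbdA : Bornology.IsBounded (finDisjSums S μ A)) (hA : A ∈ S) :
    sSup (finDisjSums S μ A) + sInf (finDisjSums S μ A) = μ A := by
  have hba := hbdA.bddAbove
  have hbb := hbdA.bddBelow
  have key : ∀ z ∈ finDisjSums S μ A,
      sInf (finDisjSums S μ A) ≤ μ A - z ∧ μ A - z ≤ sSup (finDisjSums S μ A) := by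
    rintro z ⟨n, B, hBS, hBsub, hBd, rfl⟩
    obtain ⟨κ, _, D, hDS, hDsub, hDd, hw⟩ := exists_compl_hasSum hS hμ hA hBS hBsub hBd
    have hmem : ∀ Ξ : Finset κ, (∑ k ∈ Ξ, μ (D k)) ∈ finDisjSums S μ A := fun Ξ =>
      finset_sum_mem_finDisjSums Ξ D (fun k _ => hDS k) (fun k _ => hDsub k)
        (fun k _ l _ h => hDd h)
    constructor
    · exact ge_of_tendsto hw (Filter.Eventually.of_forall fun Ξ => csInf_le hbb (hmem Ξ))
    · exact le_of_tendsto hw (Filter.Eventually.of_forall fun Ξ => le_csSup hba (hmem Ξ))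
  have h1 : sSup (finDisjSums S μ A) ≤ μ A - sInf (finDisjSums S μ A) :=
    csSup_le finDisjSums_nonempty fun z hz => by have := (key z hz).1; linarith
  have h2 : μ A - sSup (finDisjSums S μ A) ≤ sInf (finDisjSums S μ A) :=
    le_csInf finDisjSums_nonempty fun z hz => by have := (key z hz).2; linarith
  linarith

lemma exists_near_sSup {s : Set ℝ≥0∞} (hne : s.Nonempty) (htop : sSup s ≠ ⊤) {ε : ℝ≥0∞}
    (hε : ε ≠ 0) : ∃ y ∈ s, sSup s ≤ y + ε := by
  rcases le_or_gt (sSup s) ε with h | h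
  · obtain ⟨y, hy⟩ := hne
    exact ⟨y, hy, h.trans le_add_self⟩
  · have h1 : sSup s - ε < sSup s :=
      ENNReal.sub_lt_self htop (fun h0 => by simp [h0] at h) hε
    obtain ⟨y, hy, hlt⟩ := lt_sSup_iff.1 h1
    exact ⟨y, hy, by rw [← tsub_le_iff_right]; exact hlt.le⟩

variable {f : Set X → ℝ}

lemma pv_finite_and_toReal (hS : IsIntervalSystem S)
    (hba : BddAbove (finDisjSums S f A)) (hA : A ∈ S) :
    sSup (pvSet S f A) ≠ ⊤ ∧ (sSup (pvSet S f A)).toReal = sSup (finDisjSums S f A) := by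
  have h1 : sSup (pvSet S f A) ≤ ENNReal.ofReal (sSup (finDisjSums S f A)) :=
    sSup_le (pvSet_le_ofReal_sSup hba)
  have hne : sSup (pvSet S f A) ≠ ⊤ := ne_top_of_le_ne_top ENNReal.ofReal_ne_top h1
  refine ⟨hne, le_antisymm ?_ ?_⟩
  · have h2 := ENNReal.toReal_mono ENNReal.ofReal_ne_top h1
    rwa [ENNReal.toReal_ofReal (sSup_finDisjSums_nonneg hba)] at h2
  · refine csSup_le finDisjSums_nonempty fun z hz => ?_
    have h2 := ofReal_le_sSup_pvSet hS hA hz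
    rcases le_total z 0 with h | h
    · exact h.trans ENNReal.toReal_nonneg
    · calc z = (ENNReal.ofReal z).toReal := (ENNReal.toReal_ofReal h).symm
        _ ≤ (sSup (pvSet S f A)).toReal := ENNReal.toReal_mono hne h2

lemma pv_sigma_additive (hS : IsIntervalSystem S) (hf : IsAddMeasure S f)
    (hbd : ∀ A ∈ S, BddAbove (finDisjSums S f A))
    {ι : Type} [Countable ι] {A : ι → Set X} {A₀ : Set X}
    (_hA₀ : A₀ ∈ S) (hAS : ∀ i, A i ∈ S)
    (hAd : Pairwise fun i j => Disjoint (A i) (A j)) (hAu : (⋃ i, A i) = A₀) :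
    sSup (pvSet S f A₀) = ∑' i, sSup (pvSet S f (A i)) := by
  apply le_antisymm
  · refine sSup_le ?_
    rintro s ⟨ι', _, B, hBS, hBd, hBu, rfl⟩
    exact tsum_ofReal_le_sum_sSup hS hf hBS hAS hBd hAd (hBu.trans hAu.symm)
  · rw [ENNReal.tsum_eq_iSup_sum]
    refine iSup_le fun J => ?_
    rcases eq_or_ne J ∅ with rfl | hJne
    · simp
    refine ENNReal.le_of_forall_pos_le_add fun ε hε hP => ?_
    have hcard : (J.card : ℝ≥0∞) ≠ 0 := by
      simpa using Finset.card_ne_zero_of_mem (Finset.nonempty_of_ne_empty hJne).choose_spec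
    set ε' : ℝ≥0∞ := (ε : ℝ≥0∞) / J.card with hε'def
    have hε' : ε' ≠ 0 := by
      simp only [hε'def, ne_eq, ENNReal.div_eq_zero_iff, ENNReal.natCast_ne_top, or_false]
      exact fun h => (by exact_mod_cast hε.ne' : (ε : ℝ≥0∞) ≠ 0) h
    have hch : ∀ i : ι, ∃ (κ : Type) (_ : Countable κ) (D : κ → Set X),
        (∀ k, D k ∈ S) ∧ (Pairwise fun k l => Disjoint (D k) (D l)) ∧ (⋃ k, D k) = A i ∧
        (i ∈ J → sSup (pvSet S f (A i)) ≤ (∑' k, ENNReal.ofReal (f (D k))) + ε') := by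
      intro i
      by_cases hi : i ∈ J
      · obtain ⟨y, hy, hle⟩ := exists_near_sSup (pvSet_nonempty (hAS i))
          (pv_finite_and_toReal hS (hbd (A i) (hAS i)) (hAS i)).1 hε'
        obtain ⟨κ, _, D, h1, h2, h3, rfl⟩ := hy
        exact ⟨κ, ‹_›, D, h1, h2, h3, fun _ => hle⟩
      · exact ⟨Unit, inferInstance, fun _ => A i, fun _ => hAS i, Subsingleton.pairwise,
          Set.iUnion_const _, fun h => absurd h hi⟩
    choose κ hκ D hDS hDd hDu hDle using hch
    have : ∀ i, Countable (κ i) := hκ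
    have hmem : (∑' p : Σ i, κ i, ENNReal.ofReal (f (D p.1 p.2))) ∈ pvSet S f A₀ := by
      refine mem_pvSet (fun p => hDS p.1 p.2)
        (pairwise_sigma hAd (fun i x => (hDu i) ▸ Set.subset_iUnion (D i) x) hDd) ?_
      rw [Set.iUnion_sigma]
      rw [← hAu]
      exact Set.iUnion_congr hDu
    calc ∑ i ∈ J, sSup (pvSet S f (A i))
        ≤ ∑ i ∈ J, ((∑' k, ENNReal.ofReal (f (D i k))) + ε') :=
          Finset.sum_le_sum fun i hi => hDle i hi
      _ = (∑ i ∈ J, ∑' k, ENNReal.ofReal (f (D i k))) + J.card • ε' := by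
          rw [Finset.sum_add_distrib, Finset.sum_const]
      _ ≤ sSup (pvSet S f A₀) + ε := by
          refine add_le_add ?_ ?_
          · refine le_trans ?_ (le_sSup hmem)
            rw [ENNReal.tsum_sigma']
            exact ENNReal.sum_le_tsum J
          · rw [nsmul_eq_mul, hε'def]
            exact ENNReal.mul_div_le
  
end Helpers5

section Main
variable {X : Type*} {S : Set (Set X)} {μ : Set X → ℝ} {A : Set X}

lemma posVar_eq : posVar S μ A = sSup (pvSet S μ A) := rfl
lemma negVar_eq : negVar S μ A = sSup (pvSet S (fun B => -μ B) A) := rfl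
lemma totVar_eq : totVar S μ A = sSup (pvSet S (fun B => |μ B|) A) := rfl

lemma finDisjSums_neg : finDisjSums S (fun B => -μ B) A = -(finDisjSums S μ A) := by
  ext z
  simp only [Set.mem_neg, finDisjSums, Set.mem_setOf_eq]
  constructor
  · rintro ⟨n, B, h1, h2, h3, rfl⟩
    exact ⟨n, B, h1, h2, h3, by simp⟩
  · rintro ⟨n, B, h1, h2, h3, h4⟩
    refine ⟨n, B, h1, h2, h3, ?_⟩
    have hz : z = -∑ j, μ (B j) := by linarith
    rw [hz]
    exact (Finset.sum_neg_distrib _).symm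

lemma totVar_eq_add (hS : IsIntervalSystem S) (hμ : IsAddMeasure S μ) (hA : A ∈ S) :
    totVar S μ A = posVar S μ A + negVar S μ A := by
  rw [totVar_eq, posVar_eq, negVar_eq]
  refine le_antisymm ?_ (sSup_add_sSup_le_tot hS hμ hA)
  refine sSup_le ?_
  rintro s ⟨ι, _, B, hBS, hBd, hBu, rfl⟩
  have h1 : ∑' i, ENNReal.ofReal |μ (B i)| =
      (∑' i, ENNReal.ofReal (μ (B i))) + ∑' i, ENNReal.ofReal (-μ (B i)) := by
    rw [← ENNReal.tsum_add]
    exact tsum_congr fun i => (ofReal_add_ofReal_neg _).symm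
  rw [h1]
  exact add_le_add (le_sSup (mem_pvSet hBS hBd hBu)) (le_sSup (mem_pvSet hBS hBd hBu))

end Main

/-- Let `μ : S → ℝ` be a locally bounded measure on an interval system `S`.
Then `|μ|⁺, |μ|⁻, |μ|` are finite-valued (nonnegative) measures on `S`,
`μ A = |μ|⁺ A - |μ|⁻ A` and `|μ| A = |μ|⁺ A + |μ|⁻ A`, and moreover
`|μ|⁺ A = sup V(A)` and `-|μ|⁻ A = inf V(A)`, where `V(A)` is the set of finite sums
`∑ μ (B j)` over finite pairwise disjoint families in `S` contained in `A`. -/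
theorem statement16 {X : Type*} (S : Set (Set X)) (hS : IsIntervalSystem S)
    (μ : Set X → ℝ) (hμ : IsAddMeasure S μ)
    (hbd : ∀ A ∈ S, Bornology.IsBounded (finDisjSums S μ A)) :
    (∀ A ∈ S, posVar S μ A ≠ ⊤ ∧ negVar S μ A ≠ ⊤ ∧ totVar S μ A ≠ ⊤) ∧
    IsAddMeasure S (fun A => (posVar S μ A).toReal) ∧
    IsAddMeasure S (fun A => (negVar S μ A).toReal) ∧
    IsAddMeasure S (fun A => (totVar S μ A).toReal) ∧
    (∀ A ∈ S, μ A = (posVar S μ A).toReal - (negVar S μ A).toReal) ∧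
    (∀ A ∈ S, totVar S μ A = posVar S μ A + negVar S μ A) ∧
    (∀ A ∈ S, (posVar S μ A).toReal = sSup (finDisjSums S μ A)) ∧
    (∀ A ∈ S, -(negVar S μ A).toReal = sInf (finDisjSums S μ A)) := by
  have hν : IsAddMeasure S (fun B => -μ B) := neg_isAddMeasure hμ
  -- boundedness facts
  have hbaP : ∀ A ∈ S, BddAbove (finDisjSums S μ A) := fun A hA => (hbd A hA).bddAbove
  have hbaN : ∀ A ∈ S, BddAbove (finDisjSums S (fun B => -μ B) A) := by
    intro A hA
    rw [finDisjSums_neg]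
    exact bddAbove_neg.2 (hbd A hA).bddBelow
  -- finiteness and sup characterizations
  have hP := fun A (hA : A ∈ S) => pv_finite_and_toReal (f := μ) hS (hbaP A hA) hA
  have hN := fun A (hA : A ∈ S) =>
    pv_finite_and_toReal (f := fun B => -μ B) hS (hbaN A hA) hA
  have hPfin : ∀ A ∈ S, posVar S μ A ≠ ⊤ := fun A hA => (hP A hA).1
  have hNfin : ∀ A ∈ S, negVar S μ A ≠ ⊤ := fun A hA => (hN A hA).1
  have hPtoReal : ∀ A ∈ S, (posVar S μ A).toReal = sSup (finDisjSums S μ A) :=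
    fun A hA => (hP A hA).2
  have hNtoReal : ∀ A ∈ S, (negVar S μ A).toReal = -sInf (finDisjSums S μ A) := by
    intro A hA
    rw [negVar_eq, (hN A hA).2, finDisjSums_neg, Real.sInf_def, neg_neg]
  have htot : ∀ A ∈ S, totVar S μ A = posVar S μ A + negVar S μ A :=
    fun A hA => totVar_eq_add hS hμ hA
  -- measures
  have hmeasP : IsAddMeasure S (fun A => (posVar S μ A).toReal) := by
    intro ι A B hc hB hA hd hu
    have hsig : posVar S μ B = ∑' i, posVar S μ (A i) :=
      pv_sigma_additive hS hμ hbaP hB hA hd hu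
    have hfin : (∑' i, posVar S μ (A i)) ≠ ⊤ := hsig ▸ hPfin B hB
    have h2 := ENNReal.hasSum_toReal hfin
    rw [← ENNReal.tsum_toReal_eq (fun i => hPfin (A i) (hA i)), ← hsig] at h2
    exact h2
  have hmeasN : IsAddMeasure S (fun A => (negVar S μ A).toReal) := by
    intro ι A B hc hB hA hd hu
    have hsig : negVar S μ B = ∑' i, negVar S μ (A i) :=
      pv_sigma_additive hS hν hbaN hB hA hd hu
    have hfin : (∑' i, negVar S μ (A i)) ≠ ⊤ := hsig ▸ hNfin B hB
    have h2 := ENNReal.hasSum_toReal hfin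
    rw [← ENNReal.tsum_toReal_eq (fun i => hNfin (A i) (hA i)), ← hsig] at h2
    exact h2
  have hmeasT : IsAddMeasure S (fun A => (totVar S μ A).toReal) := by
    intro ι A B hc hB hA hd hu
    have h1 := hmeasP ι A B hc hB hA hd hu
    have h2 := hmeasN ι A B hc hB hA hd hu
    have h3 := h1.add h2
    have he : ∀ C ∈ S, (totVar S μ C).toReal =
        (posVar S μ C).toReal + (negVar S μ C).toReal := by
      intro C hC
      rw [htot C hC, ENNReal.toReal_add (hPfin C hC) (hNfin C hC)]
    have hfe : (fun i => (totVar S μ (A i)).toReal) =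
        fun i => (posVar S μ (A i)).toReal + (negVar S μ (A i)).toReal :=
      funext fun i => he (A i) (hA i)
    show HasSum (fun i => (totVar S μ (A i)).toReal) ((totVar S μ B).toReal)
    rw [hfe, he B hB]
    exact h3
  refine ⟨fun A hA => ⟨hPfin A hA, hNfin A hA, by
      rw [htot A hA]; exact ENNReal.add_ne_top.2 ⟨hPfin A hA, hNfin A hA⟩⟩,
    hmeasP, hmeasN, hmeasT, ?_, htot, hPtoReal, fun A hA => by rw [hNtoReal A hA, neg_neg]⟩
  intro A hA
  have hkey := sSup_add_sInf_finDisjSums hS hμ (hbd A hA) hA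
  rw [hPtoReal A hA, hNtoReal A hA]
  linarith
end

section
/- Let 𝔖 be an interval system on a set X and μ : 𝔖 → ℝ a measure with μ(S) ≥ 0 for all S ∈ 𝔖. Let (c_λ, C_λ)_{λ∈Λ} and (d_γ, D_γ)_{γ∈Γ} be countable indexed families with c_λ, d_γ ∈ [0,∞] (extended nonnegative reals) and C_λ, D_γ ∈ 𝔖. (a) If for every x ∈ X one has ∑_{λ : x∈C_λ} c_λ ≤ ∑_{γ : x∈D_γ} d_γ in [0,∞], then ∑_{λ∈Λ} c_λ·μ(C_λ) ≤ ∑_{γ∈Γ} d_γ·μ(D_γ) in [0,∞]. (b) Consequently, if for every x ∈ X one has ∑_{λ : x∈C_λ} c_λ = ∑_{γ : x∈D_γ} d_γ, then ∑_{λ∈Λ} c_λ·μ(C_λ) = ∑_{γ∈Γ} d_γ·μ(D_γ). -/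
open ENNReal

section St17aux
open Set MeasureTheory

namespace St17

variable {X : Type*} {S : Set (Set X)} {μ : Set X → ℝ}

def Decomp (S : Set (Set X)) (E : Set X) : Prop :=
  ∃ D : Set (Set X), D ⊆ S ∧ D.Countable ∧ D.PairwiseDisjoint id ∧ ⋃₀ D = E

lemma decomp_empty : Decomp S ∅ :=
  ⟨∅, empty_subset _, countable_empty, by simp, by simp⟩

lemma decomp_diff (hS : IsIntervalSystem S) {E B : Set X} (hE : Decomp S E) (hB : B ∈ S) :
    Decomp S (E \ B) := by
  obtain ⟨D, hDS, hDc, hDd, hU⟩ := hE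
  have hch : ∀ d : D, ∃ F : Set (Set X),
      F ⊆ S ∧ F.Countable ∧ F.PairwiseDisjoint id ∧ ⋃₀ F = (d : Set X) \ B :=
    fun d => (hS d (hDS d.2) B hB).1
  choose F hFS hFc hFd hFU using hch
  haveI := hDc.to_subtype
  refine ⟨⋃ d : D, F d, iUnion_subset fun d => hFS d, countable_iUnion hFc, ?_, ?_⟩
  · intro x hx y hy hxy
    simp only [mem_iUnion] at hx hy
    obtain ⟨d, hxd⟩ := hx; obtain ⟨e, hye⟩ := hy
    by_cases hde : d = e
    · subst hde; exact hFd d hxd hye hxy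
    · have hd' : (d : Set X) ≠ e := fun h => hde (Subtype.ext h)
      have h1 : x ⊆ (d : Set X) \ B := (hFU d) ▸ subset_sUnion_of_mem hxd
      have h2 : y ⊆ (e : Set X) \ B := (hFU e) ▸ subset_sUnion_of_mem hye
      exact (hDd d.2 e.2 hd').mono (h1.trans diff_subset) (h2.trans diff_subset)
  · rw [sUnion_iUnion]
    calc (⋃ d : D, ⋃₀ F d) = ⋃ d : D, ((d : Set X) \ B) := by simp_rw [hFU]
    _ = (⋃ d : D, (d : Set X)) \ B := by rw [iUnion_diff]
    _ = E \ B := by rw [← sUnion_eq_iUnion, hU]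

lemma decomp_inter (hS : IsIntervalSystem S) {E B : Set X} (hE : Decomp S E) (hB : B ∈ S) :
    Decomp S (E ∩ B) := by
  obtain ⟨D, hDS, hDc, hDd, hU⟩ := hE
  have hch : ∀ d : D, ∃ F : Set (Set X),
      F ⊆ S ∧ F.Countable ∧ F.PairwiseDisjoint id ∧ ⋃₀ F = (d : Set X) ∩ B :=
    fun d => (hS d (hDS d.2) B hB).2
  choose F hFS hFc hFd hFU using hch
  haveI := hDc.to_subtype
  refine ⟨⋃ d : D, F d, iUnion_subset fun d => hFS d, countable_iUnion hFc, ?_, ?_⟩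
  · intro x hx y hy hxy
    simp only [mem_iUnion] at hx hy
    obtain ⟨d, hxd⟩ := hx; obtain ⟨e, hye⟩ := hy
    by_cases hde : d = e
    · subst hde; exact hFd d hxd hye hxy
    · have hd' : (d : Set X) ≠ e := fun h => hde (Subtype.ext h)
      have h1 : x ⊆ (d : Set X) ∩ B := (hFU d) ▸ subset_sUnion_of_mem hxd
      have h2 : y ⊆ (e : Set X) ∩ B := (hFU e) ▸ subset_sUnion_of_mem hye
      exact (hDd d.2 e.2 hd').mono (h1.trans inter_subset_left)
        (h2.trans inter_subset_left)
  · rw [sUnion_iUnion]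
    calc (⋃ d : D, ⋃₀ F d) = ⋃ d : D, ((d : Set X) ∩ B) := by simp_rw [hFU]
    _ = (⋃ d : D, (d : Set X)) ∩ B := by rw [iUnion_inter]
    _ = E ∩ B := by rw [← sUnion_eq_iUnion, hU]

end St17

namespace St17
variable {X : Type*} {S : Set (Set X)} {μ : Set X → ℝ}

lemma mu_empty (hμ : IsAddMeasure S μ) (h : (∅ : Set X) ∈ S) : μ ∅ = 0 := by
  have h2 := hμ Empty (fun e => e.elim) ∅ inferInstance h (fun i => i.elim)
    Subsingleton.pairwise (by simp)
  exact h2.unique hasSum_empty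

lemma ofReal_sUnion (hμ : IsAddMeasure S μ) (hnn : ∀ B ∈ S, 0 ≤ μ B)
    {D : Set (Set X)} {B : Set X} (hB : B ∈ S) (hDS : D ⊆ S) (hDc : D.Countable)
    (hDd : D.PairwiseDisjoint id) (hU : ⋃₀ D = B) :
    ENNReal.ofReal (μ B) = ∑' d : D, ENNReal.ofReal (μ (d : Set X)) := by
  haveI := hDc.to_subtype
  obtain ⟨f, hf⟩ := Countable.exists_injective_nat (↥D)
  let e := Equiv.ofInjective f hf
  have hsum : HasSum (fun t : ↥(Set.range f) => μ ((e.symm t : D) : Set X)) (μ B) := by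
    refine hμ (↥(Set.range f)) (fun t => ((e.symm t : D) : Set X)) B inferInstance hB
      (fun t => hDS (e.symm t).2) ?_ ?_
    · intro i j hij
      have h1 : e.symm i ≠ e.symm j := fun h => hij (e.symm.injective h)
      have h2 : ((e.symm i : D) : Set X) ≠ ((e.symm j : D) : Set X) :=
        fun h => h1 (Subtype.ext h)
      exact hDd (e.symm i).2 (e.symm j).2 h2
    · rw [← hU, sUnion_eq_iUnion]
      exact e.symm.surjective.iUnion_comp fun d : D => (d : Set X)
  have h1 : ENNReal.ofReal (μ B) = ∑' t : ↥(Set.range f),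
      ENNReal.ofReal (μ ((e.symm t : D) : Set X)) := by
    rw [← hsum.tsum_eq]
    exact ENNReal.ofReal_tsum_of_nonneg (fun t => hnn _ (hDS (e.symm t).2)) hsum.summable
  rw [h1]
  exact e.symm.tsum_eq fun d : D => ENNReal.ofReal (μ (d : Set X))

end St17

namespace St17
variable {X : Type*} {S : Set (Set X)} {μ : Set X → ℝ}

lemma decomp_diff_range (hS : IsIntervalSystem S) {E : Set X} (hE : Decomp S E)
    (f : ℕ → Set X) (hf : ∀ m, f m ∈ S ∨ f m = ∅) (n : ℕ) :
    Decomp S (E \ ⋃ m ∈ Finset.range n, f m) := by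
  induction n with
  | zero => simpa using hE
  | succ k ih =>
      have hstep : (⋃ m ∈ Finset.range (k + 1), f m)
          = (⋃ m ∈ Finset.range k, f m) ∪ f k := by
        rw [Finset.range_add_one]
        simp [Set.biUnion_insert, Set.union_comm]
      rw [hstep, ← diff_diff]
      rcases hf k with h | h
      · exact decomp_diff hS ih h
      · rwa [h, diff_empty]

lemma decomp_diff_finset (hS : IsIntervalSystem S) {E : Set X} (hE : Decomp S E)
    (G : Finset (Set X)) (hG : ↑G ⊆ S) : Decomp S (E \ ⋃₀ ↑G) := by
  classical
  induction G using Finset.induction_on with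
  | empty => simpa using hE
  | insert a G' hnotmem ih =>
      have h1 : (⋃₀ ↑(insert a G') : Set X) = a ∪ ⋃₀ ↑G' := by
        simp [Finset.coe_insert, Set.sUnion_insert]
      rw [h1, Set.union_comm, ← diff_diff]
      exact decomp_diff hS (ih fun x hx => hG (by simp [hx]))
        (hG (by simp))

lemma pairwiseDisjoint_union_of {D₁ D₂ : Set (Set X)} {U : Set X}
    (h₁ : D₁.PairwiseDisjoint id) (h₂ : D₂.PairwiseDisjoint id)
    (hs₁ : ⋃₀ D₁ ⊆ U) (hs₂ : ⋃₀ D₂ ⊆ Uᶜ) : (D₁ ∪ D₂).PairwiseDisjoint id := by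
  intro a ha b hb hab
  rcases ha with ha | ha <;> rcases hb with hb | hb
  · exact h₁ ha hb hab
  · exact Disjoint.mono ((subset_sUnion_of_mem ha).trans hs₁)
      ((subset_sUnion_of_mem hb).trans hs₂) disjoint_compl_right
  · exact Disjoint.mono ((subset_sUnion_of_mem ha).trans hs₂)
      ((subset_sUnion_of_mem hb).trans hs₁) disjoint_compl_left
  · exact h₂ ha hb hab

lemma tsum_ofReal_le (hS : IsIntervalSystem S) (hμ : IsAddMeasure S μ)
    (hnn : ∀ B ∈ S, 0 ≤ μ B) {D : Set (Set X)} {T : Set X} (hT : T ∈ S)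
    (hDS : D ⊆ S) (hDc : D.Countable) (hDd : D.PairwiseDisjoint id)
    (hsub : ⋃₀ D ⊆ T) :
    ∑' d : D, ENNReal.ofReal (μ (d : Set X)) ≤ ENNReal.ofReal (μ T) := by
  classical
  rw [ENNReal.tsum_eq_iSup_sum]
  refine iSup_le fun F => ?_
  set G : Finset (Set X) := F.image Subtype.val with hG
  have hGD : (↑G : Set (Set X)) ⊆ D := by
    intro g hg
    simp only [hG, Finset.coe_image, mem_image, Finset.mem_coe] at hg
    obtain ⟨d, _, rfl⟩ := hg
    exact d.2
  have hGU : ⋃₀ (↑G : Set (Set X)) ⊆ T := fun x hx => by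
    obtain ⟨g, hg, hxg⟩ := hx
    exact hsub ⟨g, hGD hg, hxg⟩
  obtain ⟨D₂, hD₂S, hD₂c, hD₂d, hD₂U⟩ :=
    decomp_diff_finset hS ⟨{T}, by simpa using hT, countable_singleton _,
      pairwiseDisjoint_singleton _ _, sUnion_singleton _⟩ G (fun g hg => hDS (hGD hg))
  set D' : Set (Set X) := ↑G ∪ D₂ with hD'
  have hkey : ENNReal.ofReal (μ T) = ∑' d : D', ENNReal.ofReal (μ (d : Set X)) := by
    refine ofReal_sUnion hμ hnn hT (union_subset (fun g hg => hDS (hGD hg)) hD₂S)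
      (G.countable_toSet.union hD₂c) ?_ ?_
    · refine pairwiseDisjoint_union_of (hDd.subset hGD) hD₂d subset_rfl ?_
      rw [hD₂U]
      intro x hx
      exact fun hx' => hx.2 hx'
    · rw [sUnion_union, hD₂U, union_diff_cancel hGU]
  have hsum1 : ∑ d ∈ F, ENNReal.ofReal (μ (d : Set X))
      = ∑ g ∈ G, ENNReal.ofReal (μ g) := by
    rw [hG, Finset.sum_image (fun x _ y _ h => Subtype.ext h)]
  rw [hsum1]
  calc ∑ g ∈ G, ENNReal.ofReal (μ g)
      = ∑' g : (↑G : Set (Set X)), ENNReal.ofReal (μ (g : Set X)) :=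
        (G.tsum_subtype fun g => ENNReal.ofReal (μ g)).symm
    _ ≤ ∑' d : D', ENNReal.ofReal (μ (d : Set X)) := by
        rw [hD']
        exact ENNReal.tsum_mono_subtype (fun g => ENNReal.ofReal (μ g))
          (subset_union_left (s := (↑G : Set (Set X))) (t := D₂))
    _ = ENNReal.ofReal (μ T) := hkey.symm

end St17

namespace St17
variable {X : Type*} {S : Set (Set X)} {μ : Set X → ℝ}

open Classical in
noncomputable def mfun (S : Set (Set X)) (μ : Set X → ℝ) : Set X → ℝ≥0∞ :=
  fun E => if E ∈ S then ENNReal.ofReal (μ E) else if E = ∅ then 0 else ∞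

lemma mfun_empty (hμ : IsAddMeasure S μ) : mfun S μ ∅ = 0 := by
  by_cases h : (∅ : Set X) ∈ S
  · simp [mfun, h, mu_empty hμ h]
  · simp [mfun, h]

lemma subadd (hS : IsIntervalSystem S) (hμ : IsAddMeasure S μ)
    (hnn : ∀ B ∈ S, 0 ≤ μ B) {A : Set X} (hA : A ∈ S) (f : ℕ → Set X)
    (hcov : A ⊆ ⋃ n, f n) :
    ENNReal.ofReal (μ A) ≤ ∑' n, mfun S μ (f n) := by
  classical
  by_cases hf : ∀ n, f n ∈ S ∨ f n = ∅
  swap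
  · push_neg at hf
    obtain ⟨n, hn1, hn2⟩ := hf
    have htop : mfun S μ (f n) = ∞ := by simp [mfun, hn1, hn2.ne_empty]
    exact le_trans (le_trans le_top (le_of_eq htop.symm)) (ENNReal.le_tsum n)
  set E : ℕ → Set X := fun n => (A ∩ f n) \ ⋃ m ∈ Finset.range n, f m with hE
  have hdec : ∀ n, Decomp S (E n) := by
    intro n
    rcases hf n with h | h
    · exact decomp_diff_range hS (hS A hA (f n) h).2 f hf n
    · have : E n = ∅ := by simp [hE, h]
      rw [this]; exact decomp_empty
  choose Dn hDnS hDnc hDnd hDnU using hdec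
  have hEf : ∀ n, E n ⊆ f n := fun n => diff_subset.trans inter_subset_right
  have hEdisj : ∀ m n, m < n → Disjoint (E m) (E n) := by
    intro m n hmn
    refine disjoint_left.mpr fun x hxm hxn => ?_
    exact hxn.2 (mem_biUnion (Finset.mem_range.mpr hmn) (hEf m hxm))
  have hEU : (⋃ n, E n) = A := by
    apply subset_antisymm
    · exact iUnion_subset fun n => diff_subset.trans inter_subset_left
    · intro x hx
      have hex : ∃ n, x ∈ f n := by simpa using hcov hx
      refine mem_iUnion.mpr ⟨Nat.find hex, ⟨⟨hx, Nat.find_spec hex⟩, ?_⟩⟩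
      intro hmem
      simp only [mem_iUnion, exists_prop] at hmem
      obtain ⟨m, hm, hxm⟩ := hmem
      exact Nat.find_min hex (Finset.mem_range.mp hm) hxm
  have hkey : ENNReal.ofReal (μ A) = ∑' d : (⋃ n, Dn n),
      ENNReal.ofReal (μ (d : Set X)) := by
    refine ofReal_sUnion hμ hnn hA (iUnion_subset hDnS) (countable_iUnion hDnc) ?_ ?_
    · intro x hx y hy hxy
      simp only [mem_iUnion] at hx hy
      obtain ⟨n, hxn⟩ := hx; obtain ⟨n', hyn⟩ := hy
      rcases lt_trichotomy n n' with h | h | h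
      · exact (hEdisj n n' h).mono ((hDnU n) ▸ subset_sUnion_of_mem hxn)
          ((hDnU n') ▸ subset_sUnion_of_mem hyn)
      · subst h; exact hDnd n hxn hyn hxy
      · exact ((hEdisj n' n h).symm).mono ((hDnU n) ▸ subset_sUnion_of_mem hxn)
          ((hDnU n') ▸ subset_sUnion_of_mem hyn)
    · rw [sUnion_iUnion]
      simp_rw [hDnU]
      exact hEU
  rw [hkey]
  refine le_trans (ENNReal.tsum_iUnion_le_tsum (fun s => ENNReal.ofReal (μ s)) Dn)
    (ENNReal.tsum_le_tsum fun n => ?_)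
  rcases hf n with h | h
  · have : mfun S μ (f n) = ENNReal.ofReal (μ (f n)) := by simp [mfun, h]
    rw [this]
    exact tsum_ofReal_le hS hμ hnn h (hDnS n) (hDnc n) (hDnd n)
      ((hDnU n) ▸ hEf n)
  · have hzero : ∑' d : (Dn n), ENNReal.ofReal (μ (d : Set X)) = 0 := by
      refine ENNReal.tsum_eq_zero.mpr fun d => ?_
      have hdE : (d : Set X) ⊆ E n := (hDnU n) ▸ subset_sUnion_of_mem d.2
      have hEn : E n = ∅ := by simp [hE, h]
      have hd0 : (d : Set X) = ∅ := subset_eq_empty hdE hEn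
      have : μ (d : Set X) = 0 := by
        rw [hd0]
        exact mu_empty hμ (hd0 ▸ hDnS n d.2)
      simp [this]
    rw [hzero]
    exact zero_le

lemma nu_eq (hS : IsIntervalSystem S) (hμ : IsAddMeasure S μ)
    (hnn : ∀ B ∈ S, 0 ≤ μ B) {A : Set X} (hA : A ∈ S) :
    MeasureTheory.OuterMeasure.ofFunction (mfun S μ) (mfun_empty hμ) A
      = ENNReal.ofReal (μ A) := by
  refine le_antisymm (le_trans (MeasureTheory.OuterMeasure.ofFunction_le A)
    (by simp [mfun, hA])) ?_
  rw [MeasureTheory.OuterMeasure.ofFunction_apply]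
  exact le_iInf₂ fun t ht => subadd hS hμ hnn hA t ht

end St17

namespace St17
variable {X : Type*} {S : Set (Set X)} {μ : Set X → ℝ}

lemma carath_aux (hS : IsIntervalSystem S) (hμ : IsAddMeasure S μ)
    (hnn : ∀ B ∈ S, 0 ≤ μ B) {A : Set X} (hA : A ∈ S) (t : Set X) :
    MeasureTheory.OuterMeasure.ofFunction (mfun S μ) (mfun_empty hμ) (t ∩ A)
      + MeasureTheory.OuterMeasure.ofFunction (mfun S μ) (mfun_empty hμ) (t \ A)
      ≤ mfun S μ t := by
  classical
  set ν := MeasureTheory.OuterMeasure.ofFunction (mfun S μ) (mfun_empty hμ) with hν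
  by_cases ht : t ∈ S
  swap
  · by_cases ht0 : t = ∅
    · subst ht0
      simp [hν, mfun_empty hμ]
    · have : mfun S μ t = ∞ := by simp [mfun, ht, ht0]
      rw [this]; exact le_top
  obtain ⟨D₁, hD₁S, hD₁c, hD₁d, hD₁U⟩ := (hS t ht A hA).2
  obtain ⟨D₂, hD₂S, hD₂c, hD₂d, hD₂U⟩ := (hS t ht A hA).1
  set D₁' := D₁ \ {(∅ : Set X)} with hD₁'
  set D₂' := D₂ \ {(∅ : Set X)} with hD₂'
  have hU₁ : ⋃₀ D₁' = t ∩ A := by rw [hD₁', sUnion_diff_singleton_empty, hD₁U]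
  have hU₂ : ⋃₀ D₂' = t \ A := by rw [hD₂', sUnion_diff_singleton_empty, hD₂U]
  have hsub1 : ν (t ∩ A) ≤ ∑' d : D₁', ENNReal.ofReal (μ (d : Set X)) := by
    rw [← hU₁, sUnion_eq_biUnion]
    refine le_trans (MeasureTheory.measure_biUnion_le ν (hD₁c.mono diff_subset) id) ?_
    refine ENNReal.tsum_le_tsum fun d => ?_
    refine le_trans (MeasureTheory.OuterMeasure.ofFunction_le _) ?_
    simp [mfun, hD₁S (diff_subset d.2)]
  have hsub2 : ν (t \ A) ≤ ∑' d : D₂', ENNReal.ofReal (μ (d : Set X)) := by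
    rw [← hU₂, sUnion_eq_biUnion]
    refine le_trans (MeasureTheory.measure_biUnion_le ν (hD₂c.mono diff_subset) id) ?_
    refine ENNReal.tsum_le_tsum fun d => ?_
    refine le_trans (MeasureTheory.OuterMeasure.ofFunction_le _) ?_
    simp [mfun, hD₂S (diff_subset d.2)]
  have hdisj : Disjoint D₁' D₂' := by
    rw [Set.disjoint_left]
    rintro d ⟨hd1, hd1e⟩ ⟨hd2, _⟩
    refine hd1e (mem_singleton_iff.mpr ?_)
    have h1 : d ⊆ t ∩ A := hD₁U ▸ subset_sUnion_of_mem hd1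
    have h2 : d ⊆ t \ A := hD₂U ▸ subset_sUnion_of_mem hd2
    refine subset_eq_empty (subset_inter h1 h2 |>.trans ?_) rfl
    intro x hx
    exact absurd hx.1.2 hx.2.2
  have htot : ENNReal.ofReal (μ t)
      = ∑' d : ↥(D₁' ∪ D₂'), ENNReal.ofReal (μ (d : Set X)) := by
    refine ofReal_sUnion hμ hnn ht
      (union_subset ((diff_subset).trans hD₁S) ((diff_subset).trans hD₂S))
      ((hD₁c.mono diff_subset).union (hD₂c.mono diff_subset)) ?_ ?_
    · refine pairwiseDisjoint_union_of (hD₁d.subset diff_subset)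
        (hD₂d.subset diff_subset) (hU₁ ▸ inter_subset_right) ?_
      rw [hU₂]
      intro x hx
      exact fun hx' => hx.2 hx'
    · rw [sUnion_union, hU₁, hU₂, inter_union_diff]
  have hmt : mfun S μ t = ENNReal.ofReal (μ t) := by simp [mfun, ht]
  rw [hmt, htot,
    ENNReal.summable.tsum_union_disjoint (f := fun d : Set X => ENNReal.ofReal (μ d))
      hdisj ENNReal.summable]
  exact add_le_add hsub1 hsub2

lemma carath (hS : IsIntervalSystem S) (hμ : IsAddMeasure S μ)
    (hnn : ∀ B ∈ S, 0 ≤ μ B) {A : Set X} (hA : A ∈ S) :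
    MeasurableSet[(MeasureTheory.OuterMeasure.ofFunction (mfun S μ)
      (mfun_empty hμ)).caratheodory] A := by
  set ν := MeasureTheory.OuterMeasure.ofFunction (mfun S μ) (mfun_empty hμ) with hν
  rw [MeasureTheory.OuterMeasure.isCaratheodory_iff_le]
  intro t
  have hle : ν t = ⨅ (g : ℕ → Set X) (_ : t ⊆ ⋃ n, g n), ∑' n, mfun S μ (g n) :=
    MeasureTheory.OuterMeasure.ofFunction_apply _ _ _
  rw [hle]
  refine le_iInf₂ fun g hg => ?_
  have h1 : ν (t ∩ A) ≤ ∑' n, ν (g n ∩ A) := by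
    refine le_trans (measure_mono ?_) (measure_iUnion_le _)
    rw [← iUnion_inter]
    exact inter_subset_inter_left _ hg
  have h2 : ν (t \ A) ≤ ∑' n, ν (g n \ A) := by
    refine le_trans (measure_mono ?_) (measure_iUnion_le _)
    rw [← iUnion_diff]
    exact diff_subset_diff_left hg
  calc ν (t ∩ A) + ν (t \ A) ≤ (∑' n, ν (g n ∩ A)) + ∑' n, ν (g n \ A) :=
        add_le_add h1 h2
    _ = ∑' n, (ν (g n ∩ A) + ν (g n \ A)) := (ENNReal.tsum_add).symm
    _ ≤ ∑' n, mfun S μ (g n) :=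
        ENNReal.tsum_le_tsum fun n => carath_aux hS hμ hnn hA (g n)

end St17

lemma St17.key {X : Type*} {S : Set (Set X)} {μ : Set X → ℝ}
    (hS : IsIntervalSystem S) (hμ : IsAddMeasure S μ) (hnn : ∀ B ∈ S, 0 ≤ μ B)
    (ι' : Type*) [Countable ι'] (c' : ι' → ℝ≥0∞) (C' : ι' → Set X)
    (hC' : ∀ i, C' i ∈ S) :
    ∑' i, c' i * ENNReal.ofReal (μ (C' i))
      = ∫⁻ x, ∑' i, (C' i).indicator (fun _ => c' i) x
          ∂((MeasureTheory.OuterMeasure.ofFunction (St17.mfun S μ)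
              (St17.mfun_empty hμ)).toMeasure
            (ms := (MeasureTheory.OuterMeasure.ofFunction (St17.mfun S μ)
              (St17.mfun_empty hμ)).caratheodory) le_rfl) := by
  classical
  set ν := MeasureTheory.OuterMeasure.ofFunction (St17.mfun S μ) (St17.mfun_empty hμ)
  letI : MeasurableSpace X := ν.caratheodory
  have hmeas : ∀ A ∈ S, MeasurableSet A := fun A hA => St17.carath hS hμ hnn hA
  have hval : ∀ A ∈ S, ν.toMeasure le_rfl A = ENNReal.ofReal (μ A) := fun A hA => by
    rw [MeasureTheory.toMeasure_apply ν le_rfl (hmeas A hA)]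
    exact St17.nu_eq hS hμ hnn hA
  rw [MeasureTheory.lintegral_tsum
    (fun i => (measurable_const.indicator (hmeas _ (hC' i))).aemeasurable)]
  refine tsum_congr fun i => ?_
  rw [MeasureTheory.lintegral_indicator_const (hmeas _ (hC' i)), hval _ (hC' i)]

end St17aux

/-- (Comparison.) Let `μ : S → ℝ` be a nonnegative measure on an interval
system `S`, and let `(c i, C i)` and `(d j, D j)` be countable families with coefficients in
`[0, ∞]` and sets in `S`. (a) If `∑_{i : x ∈ C i} c i ≤ ∑_{j : x ∈ D j} d j` for every `x`,
then `∑ i, c i * μ (C i) ≤ ∑ j, d j * μ (D j)` in `[0, ∞]`. (b) Consequently pointwise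
equality of the sums implies equality of the integrals. -/
theorem statement17 {X : Type*} (S : Set (Set X)) (hS : IsIntervalSystem S)
    (μ : Set X → ℝ) (hμ : IsAddMeasure S μ) (hnn : ∀ B ∈ S, 0 ≤ μ B)
    (ι κ : Type*) [Countable ι] [Countable κ]
    (c : ι → ℝ≥0∞) (C : ι → Set X) (hC : ∀ i, C i ∈ S)
    (d : κ → ℝ≥0∞) (D : κ → Set X) (hD : ∀ j, D j ∈ S) :
    ((∀ x : X, ∑' i, (C i).indicator (fun _ => c i) x ≤
        ∑' j, (D j).indicator (fun _ => d j) x) →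
      ∑' i, c i * ENNReal.ofReal (μ (C i)) ≤ ∑' j, d j * ENNReal.ofReal (μ (D j))) ∧
    ((∀ x : X, ∑' i, (C i).indicator (fun _ => c i) x =
        ∑' j, (D j).indicator (fun _ => d j) x) →
      ∑' i, c i * ENNReal.ofReal (μ (C i)) = ∑' j, d j * ENNReal.ofReal (μ (D j))) := by
  constructor
  · intro hle
    rw [St17.key hS hμ hnn ι c C hC, St17.key hS hμ hnn κ d D hD]
    exact MeasureTheory.lintegral_mono fun x => hle x
  · intro heq
    rw [St17.key hS hμ hnn ι c C hC, St17.key hS hμ hnn κ d D hD]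
    exact MeasureTheory.lintegral_congr fun x => heq x
end

section
/- Let 𝔖 be an interval system on a set X and μ : 𝔖 → ℝ a locally bounded measure with positive and negative variation measures |μ|⁺, |μ|⁻. For a countable family 𝖢 = (c_λ, C_λ)_{λ∈Λ} in ℝ × 𝔖, set P(𝖢, x) = ∑_{λ : x∈C_λ} max(c_λ, 0) and N(𝖢, x) = ∑_{λ : x∈C_λ} max(−c_λ, 0) in [0,∞], and set I⁺(𝖢) = ∑_λ ( max(c_λ,0)·|μ|⁺(C_λ) + max(−c_λ,0)·|μ|⁻(C_λ) ) and I⁻(𝖢) = ∑_λ ( max(−c_λ,0)·|μ|⁺(C_λ) + max(c_λ,0)·|μ|⁻(C_λ) ) in [0,∞]. Suppose 𝖢 and 𝖣 are two such families such that (i) for every x ∈ X at which (P(𝖢,x) < ∞ or N(𝖢,x) < ∞) and (P(𝖣,x) < ∞ or N(𝖣,x) < ∞), the extended real numbers P(𝖢,x) − N(𝖢,x) and P(𝖣,x) − N(𝖣,x) are equal, and (ii) I⁺(𝖢) and I⁻(𝖢) are not both infinite, and I⁺(𝖣) and I⁻(𝖣) are not both infinite. Then I⁺(𝖢) − I⁻(𝖢)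 = I⁺(𝖣) − I⁻(𝖣) as extended real numbers. (This is the consistency of the Lebesgue–Riesz integral: its value does not depend on the representing formal sum.) -/
open ENNReal

/-- `P(𝖢, x) = ∑_{i : x ∈ C i} max (c i) 0`, in `[0, ∞]`. -/
noncomputable def formalP {X ι : Type*} (c : ι → ℝ) (C : ι → Set X) (x : X) : ℝ≥0∞ :=
  ∑' i, (C i).indicator (fun _ => ENNReal.ofReal (c i)) x

/-- `N(𝖢, x) = ∑_{i : x ∈ C i} max (-c i) 0`, in `[0, ∞]`. -/
noncomputable def formalN {X ι : Type*} (c : ι → ℝ) (C : ι → Set X) (x : X) : ℝ≥0∞ :=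
  ∑' i, (C i).indicator (fun _ => ENNReal.ofReal (-c i)) x

/-- `I⁺(𝖢) = ∑ i, (max (c i) 0 * |μ|⁺(C i) + max (-c i) 0 * |μ|⁻(C i))`, in `[0, ∞]`. -/
noncomputable def formalIpos {X ι : Type*} (S : Set (Set X)) (μ : Set X → ℝ)
    (c : ι → ℝ) (C : ι → Set X) : ℝ≥0∞ :=
  ∑' i, (ENNReal.ofReal (c i) * posVar S μ (C i) + ENNReal.ofReal (-c i) * negVar S μ (C i))

/-- `I⁻(𝖢) = ∑ i, (max (-c i) 0 * |μ|⁺(C i) + max (c i) 0 * |μ|⁻(C i))`, in `[0, ∞]`. -/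
noncomputable def formalIneg {X ι : Type*} (S : Set (Set X)) (μ : Set X → ℝ)
    (c : ι → ℝ) (C : ι → Set X) : ℝ≥0∞ :=
  ∑' i, (ENNReal.ofReal (-c i) * posVar S μ (C i) + ENNReal.ofReal (c i) * negVar S μ (C i))


open Set MeasureTheory
namespace St18


variable {X : Type*}

/-- `A` is a countable disjoint union of members of `S`. -/
def Dec (S : Set (Set X)) (A : Set X) : Prop :=
  ∃ (ι : Type) (_ : Countable ι) (B : ι → Set X), (∀ i, B i ∈ S) ∧
    (Pairwise fun i j => Disjoint (B i) (B j)) ∧ (⋃ i, B i) = A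

theorem dec_of_mem {S : Set (Set X)} {A : Set X} (h : A ∈ S) : Dec S A :=
  ⟨PUnit, inferInstance, fun _ => A, fun _ => h, fun i j hij => absurd rfl hij,
    by simp [Set.iUnion_const]⟩

theorem dec_empty {S : Set (Set X)} : Dec S (∅ : Set X) :=
  ⟨PEmpty, inferInstance, fun i => i.elim, fun i => i.elim, fun i => i.elim,
    by simp⟩

/-- Convert the set-family form of a decomposition into an indexed `Dec`,
lowering the universe to `Type 0` via countability. -/
theorem dec_of_set {S : Set (Set X)} {T : Set X}
    (h : ∃ D : Set (Set X), D ⊆ S ∧ D.Countable ∧ D.PairwiseDisjoint id ∧ ⋃₀ D = T) :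
    Dec S T := by
  obtain ⟨D, hDS, hDc, hDd, hDu⟩ := h
  rcases eq_empty_or_nonempty D with rfl | hne
  · simpa [← hDu] using dec_empty
  -- injective map into ℕ
  obtain ⟨f, hf⟩ := Set.countable_iff_exists_injective.mp hDc
  classical
  refine ⟨Set.range f, inferInstance, fun n => (show ∃ d : D, f d = n.1 from n.2).choose.1,
    ?_, ?_, ?_⟩
  · intro n
    exact hDS (show ∃ d : D, f d = n.1 from n.2).choose.2
  · intro n m hnm
    have h1 := (show ∃ d : D, f d = n.1 from n.2).choose_spec
    have h2 := (show ∃ d : D, f d = m.1 from m.2).choose_spec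
    have hd : (show ∃ d : D, f d = n.1 from n.2).choose ≠
        (show ∃ d : D, f d = m.1 from m.2).choose := by
      intro he
      apply hnm
      apply Subtype.ext
      rw [← h1, ← h2, he]
    have : ((show ∃ d : D, f d = n.1 from n.2).choose : Set X) ≠
        ((show ∃ d : D, f d = m.1 from m.2).choose : Set X) := by
      intro he; exact hd (Subtype.ext he)
    exact hDd (show ∃ d : D, f d = n.1 from n.2).choose.2
      (show ∃ d : D, f d = m.1 from m.2).choose.2 this
  · rw [← hDu]
    apply Set.eq_of_subset_of_subset
    · exact Set.iUnion_subset fun n => Set.subset_sUnion_of_mem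
        (show ∃ d : D, f d = n.1 from n.2).choose.2
    · intro x hx
      obtain ⟨A, hA, hxA⟩ := hx
      have hmem : f ⟨A, hA⟩ ∈ Set.range f := ⟨⟨A, hA⟩, rfl⟩
      refine Set.mem_iUnion.mpr ⟨⟨f ⟨A, hA⟩, hmem⟩, ?_⟩
      have hspec := (show ∃ d : D, f d = f ⟨A, hA⟩ from hmem).choose_spec
      have : (show ∃ d : D, f d = f ⟨A, hA⟩ from hmem).choose = ⟨A, hA⟩ := hf hspec
      rw [this]
      exact hxA

theorem dec_iUnion {S : Set (Set X)} {ι₀ : Type} [Countable ι₀] {T : ι₀ → Set X}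
    (hT : ∀ i, Dec S (T i)) (hd : Pairwise fun i j => Disjoint (T i) (T j)) :
    Dec S (⋃ i, T i) := by
  classical
  choose κ cnt G hGS hGd hGu using hT
  haveI : ∀ i, Countable (κ i) := cnt
  refine ⟨Σ i, κ i, inferInstance, fun p => G p.1 p.2, fun p => hGS p.1 p.2, ?_, ?_⟩
  · rintro ⟨i, k⟩ ⟨j, l⟩ hne
    rcases eq_or_ne i j with rfl | hij
    · have hkl : k ≠ l := by rintro rfl; exact hne rfl
      exact hGd i hkl
    · have h1 : G i k ⊆ T i := (hGu i) ▸ Set.subset_iUnion _ k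
      have h2 : G j l ⊆ T j := (hGu j) ▸ Set.subset_iUnion _ l
      exact (hd hij).mono h1 h2
  · rw [Set.iUnion_sigma]
    exact Set.iUnion_congr hGu

variable {S : Set (Set X)}

theorem Dec.inter (hS : IsIntervalSystem S) {A B : Set X} (hA : Dec S A) (hB : B ∈ S) :
    Dec S (A ∩ B) := by
  obtain ⟨ι₀, cnt, F, hFS, hFd, hFu⟩ := hA
  have : A ∩ B = ⋃ i, F i ∩ B := by rw [← hFu, Set.iUnion_inter]
  rw [this]
  exact dec_iUnion (fun i => dec_of_set (hS _ (hFS i) _ hB).2)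
    (fun i j hij => (hFd hij).mono Set.inter_subset_left Set.inter_subset_left)

theorem Dec.diff (hS : IsIntervalSystem S) {A B : Set X} (hA : Dec S A) (hB : B ∈ S) :
    Dec S (A \ B) := by
  obtain ⟨ι₀, cnt, F, hFS, hFd, hFu⟩ := hA
  have : A \ B = ⋃ i, F i \ B := by rw [← hFu, Set.iUnion_diff]
  rw [this]
  exact dec_iUnion (fun i => dec_of_set (hS _ (hFS i) _ hB).1)
    (fun i j hij => (hFd hij).mono Set.diff_subset Set.diff_subset)

theorem Dec.diff' (hS : IsIntervalSystem S) {A B : Set X} (hA : Dec S A)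
    (hB : B ∈ S ∨ B = ∅) : Dec S (A \ B) := by
  rcases hB with hB | rfl
  · exact hA.diff hS hB
  · simpa using hA

theorem Dec.diff_fin (hS : IsIntervalSystem S) {A : Set X} (hA : Dec S A) :
    ∀ (n : ℕ) (f : ℕ → Set X), (∀ k, f k ∈ S ∨ f k = ∅) →
      Dec S (A \ ⋃ k : Fin n, f k) := by
  intro n
  induction n with
  | zero => intro f hf; simpa using hA
  | succ m ih =>
    intro f hf
    have : (⋃ k : Fin (m + 1), f k) = (⋃ k : Fin m, f k) ∪ f m := by
      apply Set.eq_of_subset_of_subset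
      · apply Set.iUnion_subset
        intro k
        rcases eq_or_lt_of_le (Nat.lt_succ_iff.mp k.2) with h | h
        · rw [h]; exact Set.subset_union_right
        · exact Set.subset_union_of_subset_left (Set.subset_iUnion (fun k : Fin m => f k) ⟨k.1, h⟩) _
      · apply Set.union_subset
        · exact Set.iUnion_subset fun k => Set.subset_iUnion (fun k : Fin (m+1) => f k) ⟨k.1, k.2.trans (Nat.lt_succ_self m)⟩
        · exact Set.subset_iUnion (fun k : Fin (m+1) => f k) ⟨m, Nat.lt_succ_self m⟩
    rw [this, ← Set.diff_diff]
    exact (ih f hf).diff' hS (hf m)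

section
open Set
variable {X : Type*} (S : Set (Set X)) (μ : Set X → ℝ)

/-- Index type for finite disjoint families of members of `S` inside `A`. -/
def Fam (A : Set X) : Type _ :=
  {q : (n : ℕ) × (Fin n → Set X) // (∀ j, q.2 j ∈ S) ∧ (∀ j, q.2 j ⊆ A) ∧
    (Pairwise fun i j => Disjoint (q.2 i) (q.2 j))}

instance famNonempty (A : Set X) : Nonempty (Fam S A) :=
  ⟨⟨⟨0, Fin.elim0⟩, fun j => j.elim0, fun j => j.elim0, fun j => j.elim0⟩⟩

/-- Supremum of `∑ max (μ B_j) 0` over finite disjoint families in `S` inside `A`. -/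
noncomputable def fv (A : Set X) : ℝ≥0∞ :=
  ⨆ p : Fam S A, ∑ j, ENNReal.ofReal (μ (p.1.2 j))

variable {S μ}

theorem le_fv {A : Set X} {n : ℕ} {B : Fin n → Set X} (h1 : ∀ j, B j ∈ S)
    (h2 : ∀ j, B j ⊆ A) (h3 : Pairwise fun i j => Disjoint (B i) (B j)) :
    ∑ j, ENNReal.ofReal (μ (B j)) ≤ fv S μ A :=
  le_iSup_of_le (⟨⟨n, B⟩, h1, h2, h3⟩ : Fam S A) le_rfl

theorem fv_mono {A A' : Set X} (h : A ⊆ A') : fv S μ A ≤ fv S μ A' := by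
  refine iSup_le fun p => le_fv p.2.1 (fun j => (p.2.2.1 j).trans h) p.2.2.2

theorem tsum_ofReal_le_fv {A : Set X} {ι₀ : Type*} {B : ι₀ → Set X}
    (h1 : ∀ i, B i ∈ S) (h2 : ∀ i, B i ⊆ A)
    (h3 : Pairwise fun i j => Disjoint (B i) (B j)) :
    ∑' i, ENNReal.ofReal (μ (B i)) ≤ fv S μ A := by
  rw [ENNReal.tsum_eq_iSup_sum]
  refine iSup_le fun t => ?_
  classical
  have e := t.equivFin
  have hsum : ∑ i ∈ t, ENNReal.ofReal (μ (B i)) =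
      ∑ j : Fin t.card, ENNReal.ofReal (μ (B (e.symm j).1)) := by
    rw [← Finset.sum_coe_sort t]
    exact Fintype.sum_equiv e _ _ (fun i => by simp)
  rw [hsum]
  refine le_fv (fun j => h1 _) (fun j => h2 _) ?_
  intro i j hij
  have : ((e.symm i : t) : ι₀) ≠ ((e.symm j : t) : ι₀) := fun hh =>
    hij (by simpa using e.symm.injective (Subtype.ext hh))
  exact h3 this

theorem mu_empty (hμ : IsAddMeasure S μ) (h : (∅ : Set X) ∈ S) : μ ∅ = 0 := by
  have hsum : HasSum (fun _ : ℕ => μ ∅) (μ ∅) :=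
    hμ ℕ (fun _ => ∅) ∅ inferInstance h (fun _ => h)
      (fun i j _ => by simp) (by simp)
  have h0 : Filter.Tendsto (fun _ : ℕ => μ ∅) Filter.cofinite (nhds 0) :=
    hsum.summable.tendsto_cofinite_zero
  exact tendsto_nhds_unique tendsto_const_nhds h0

theorem fv_empty (hμ : IsAddMeasure S μ) : fv S μ (∅ : Set X) = 0 := by
  refine le_antisymm (iSup_le fun p => ?_) zero_le
  have : ∀ j, ENNReal.ofReal (μ (p.1.2 j)) = 0 := by
    intro j
    have hj : p.1.2 j = ∅ := Set.subset_empty_iff.mp (p.2.2.1 j)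
    have hjS : (∅ : Set X) ∈ S := hj ▸ p.2.1 j
    rw [hj, mu_empty hμ hjS]
    simp
  simp [this]

theorem fv_union_le {A A' : Set X} (hd : Disjoint A A') :
    fv S μ A + fv S μ A' ≤ fv S μ (A ∪ A') := by
  refine ENNReal.iSup_add_iSup_le fun p q => ?_
  obtain ⟨⟨n, B⟩, hBS, hBA, hBd⟩ := p
  obtain ⟨⟨m, C⟩, hCS, hCA, hCd⟩ := q
  have key : ∑ j, ENNReal.ofReal (μ (B j)) + ∑ j, ENNReal.ofReal (μ (C j)) =
      ∑ j : Fin (n + m), ENNReal.ofReal (μ (Fin.append B C j)) := by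
    rw [Fin.sum_univ_add]
    simp [Fin.append_left, Fin.append_right]
  rw [key]
  refine le_fv (fun j => ?_) (fun j => ?_) ?_
  · refine Fin.addCases (fun i => ?_) (fun i => ?_) j <;>
      simp [Fin.append_left, Fin.append_right, hBS _, hCS _]
  · refine Fin.addCases (fun i => ?_) (fun i => ?_) j
    · rw [Fin.append_left]; exact (hBA i).trans Set.subset_union_left
    · rw [Fin.append_right]; exact (hCA i).trans Set.subset_union_right
  · intro i j
    refine Fin.addCases (motive := fun i => i ≠ j → Disjoint (Fin.append B C i) (Fin.append B C j))
      (fun i' => ?_) (fun i' => ?_) i <;>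
      refine Fin.addCases (motive := fun j => _ ≠ j → Disjoint (Fin.append B C _) (Fin.append B C j))
        (fun j' => ?_) (fun j' => ?_) j <;> intro hij
    · rw [Fin.append_left, Fin.append_left]
      exact hBd (fun h => hij (by rw [h]))
    · rw [Fin.append_left, Fin.append_right]
      exact hd.mono (hBA i') (hCA j')
    · rw [Fin.append_right, Fin.append_left]
      exact hd.symm.mono (hCA i') (hBA j')
    · rw [Fin.append_right, Fin.append_right]
      exact hCd (fun h => hij (by rw [h]))

theorem finset_sum_fv_le {A : Set X} {ι' : Type*} {P : ι' → Set X}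
    (hd : Pairwise fun i j => Disjoint (P i) (P j)) (hsub : ∀ i, P i ⊆ A)
    (t : Finset ι') : ∑ i ∈ t, fv S μ (P i) ≤ fv S μ A := by
  classical
  have main : ∀ t : Finset ι', ∑ i ∈ t, fv S μ (P i) ≤ fv S μ (⋃ i ∈ t, P i) := by
    intro t
    induction t using Finset.cons_induction with
    | empty => simp
    | cons a t ha ih =>
      rw [Finset.sum_cons]
      have hdd : Disjoint (P a) (⋃ i ∈ t, P i) := by
        refine Set.disjoint_iUnion₂_right.mpr fun i hi => ?_
        exact hd (fun h => ha (h ▸ hi))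
      calc fv S μ (P a) + ∑ i ∈ t, fv S μ (P i) ≤ fv S μ (P a) + fv S μ (⋃ i ∈ t, P i) := by
            exact add_le_add le_rfl ih
        _ ≤ fv S μ (P a ∪ ⋃ i ∈ t, P i) := fv_union_le hdd
        _ = fv S μ (⋃ i ∈ Finset.cons a t ha, P i) := by
            congr 1
            simp [Finset.cons_eq_insert, Set.biUnion_insert]
  exact (main t).trans (fv_mono (Set.iUnion₂_subset fun i _ => hsub i))

theorem tsum_fv_le {A : Set X} {ι' : Type*} {P : ι' → Set X}
    (hd : Pairwise fun i j => Disjoint (P i) (P j)) (hsub : ∀ i, P i ⊆ A) :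
    ∑' i, fv S μ (P i) ≤ fv S μ A := by
  rw [ENNReal.tsum_eq_iSup_sum]
  exact iSup_le fun t => finset_sum_fv_le hd hsub t

end
section
open Set
variable {X : Type*} {S : Set (Set X)} {μ : Set X → ℝ}

theorem ofReal_hasSum_le {ι₀ : Type*} {f : ι₀ → ℝ} {a : ℝ} (h : HasSum f a) :
    ENNReal.ofReal a ≤ ∑' i, ENNReal.ofReal (f i) := by
  by_cases htop : ∑' i, ENNReal.ofReal (f i) = ⊤
  · simp [htop]
  have hs := h.summable
  have hpos : Summable (fun i => max (f i) 0) :=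
    Summable.of_nonneg_of_le (fun i => le_max_right _ _)
      (fun i => max_le (le_abs_self _) (abs_nonneg _)) hs.abs
  have h1 : a ≤ ∑' i, max (f i) 0 := by
    rw [← h.tsum_eq]
    exact Summable.tsum_le_tsum (fun i => le_max_left _ _) hs hpos
  calc ENNReal.ofReal a ≤ ENNReal.ofReal (∑' i, max (f i) 0) := ENNReal.ofReal_le_ofReal h1
    _ = ∑' i, ENNReal.ofReal (max (f i) 0) :=
        ENNReal.ofReal_tsum_of_nonneg (fun i => le_max_right _ _) hpos
    _ = ∑' i, ENNReal.ofReal (f i) := by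
        refine tsum_congr fun i => ?_
        rcases le_total (f i) 0 with hfi | hfi
        · rw [max_eq_right hfi, ENNReal.ofReal_of_nonpos hfi, ENNReal.ofReal_zero]
        · rw [max_eq_left hfi]

theorem tsum_sum_type {ι κ : Type*} (f : ι ⊕ κ → ℝ≥0∞) :
    ∑' x, f x = (∑' i, f (Sum.inl i)) + ∑' j, f (Sum.inr j) := by
  have h1 : HasSum (f ∘ (↑) : (Set.range (Sum.inl : ι → ι ⊕ κ)) → ℝ≥0∞)
      (∑' i, f (Sum.inl i)) :=
    (Equiv.hasSum_iff (Equiv.ofInjective _ Sum.inl_injective)).mp ENNReal.summable.hasSum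
  have h2 : HasSum (f ∘ (↑) : (Set.range (Sum.inr : κ → ι ⊕ κ)) → ℝ≥0∞)
      (∑' j, f (Sum.inr j)) :=
    (Equiv.hasSum_iff (Equiv.ofInjective _ Sum.inr_injective)).mp ENNReal.summable.hasSum
  exact (h1.add_isCompl Set.isCompl_range_inl_range_inr h2).tsum_eq

theorem dec_inter_disjointed (hS : IsIntervalSystem S) {T : Set X} (hT : T ∈ S)
    {f : ℕ → Set X} (hf : ∀ n, f n ∈ S ∨ f n = ∅) (n : ℕ) :
    Dec S (T ∩ disjointed f n) := by
  have heq : T ∩ disjointed f n = (T ∩ f n) \ ⋃ k : Fin n, f k.1 := by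
    rw [disjointed_eq_inter_compl]
    ext x
    simp only [Set.mem_inter_iff, Set.mem_iInter, Set.mem_compl_iff, Set.mem_diff,
      Set.mem_iUnion]
    constructor
    · rintro ⟨hxT, hxf, hcomp⟩
      exact ⟨⟨hxT, hxf⟩, fun ⟨k, hk⟩ => hcomp k.1 k.2 hk⟩
    · rintro ⟨⟨hxT, hxf⟩, hne⟩
      exact ⟨hxT, hxf, fun i hi hxi => hne ⟨⟨i, hi⟩, hxi⟩⟩
  rcases hf n with hfn | hfn
  · rw [heq]
    exact (dec_of_set (hS T hT (f n) hfn).2).diff_fin hS n _ hf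
  · have : T ∩ disjointed f n = ∅ := by
      rw [heq, hfn]; simp
    rw [this]; exact dec_empty

theorem fv_subadd (hS : IsIntervalSystem S) (hμ : IsAddMeasure S μ) {A : Set X}
    {f : ℕ → Set X} (hf : ∀ n, f n ∈ S ∨ f n = ∅) (hcov : A ⊆ ⋃ n, f n) :
    fv S μ A ≤ ∑' n, fv S μ (f n) := by
  refine iSup_le fun p => ?_
  obtain ⟨⟨N, B⟩, hBS, hBA, hBd⟩ := p
  have hdec : ∀ (j : Fin N) (n : ℕ), Dec S (B j ∩ disjointed f n) :=
    fun j n => dec_inter_disjointed hS (hBS j) hf n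
  choose κ cnt G hGS hGd hGu using hdec
  have hGsub : ∀ j n k, G j n k ⊆ B j ∩ disjointed f n :=
    fun j n k => (hGu j n) ▸ Set.subset_iUnion _ k
  -- σ-additivity of μ over the pieces of B j
  have hBsum : ∀ j, HasSum (fun q : Σ n : ℕ, κ j n => μ (G j q.1 q.2)) (μ (B j)) := by
    intro j
    haveI : ∀ n, Countable (κ j n) := fun n => cnt j n
    refine hμ _ _ _ inferInstance (hBS j) (fun q => hGS j q.1 q.2) ?_ ?_
    · rintro ⟨n, k⟩ ⟨m, l⟩ hne
      rcases eq_or_ne n m with rfl | hnm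
      · have hkl : k ≠ l := fun h => hne (by rw [h])
        exact hGd j n hkl
      · exact ((disjoint_disjointed f) hnm).mono
          ((hGsub j n k).trans Set.inter_subset_right)
          ((hGsub j m l).trans Set.inter_subset_right)
    · rw [Set.iUnion_sigma]
      have : (⋃ n, ⋃ k, G j n k) = ⋃ n, B j ∩ disjointed f n := Set.iUnion_congr (hGu j)
      rw [this, ← Set.inter_iUnion, iUnion_disjointed]
      exact Set.inter_eq_left.mpr ((hBA j).trans hcov)
  have hj : ∀ j, ENNReal.ofReal (μ (B j)) ≤
      ∑' n : ℕ, ∑' k : κ j n, ENNReal.ofReal (μ (G j n k)) := by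
    intro j
    haveI : ∀ n, Countable (κ j n) := fun n => cnt j n
    refine (ofReal_hasSum_le (hBsum j)).trans_eq ?_
    exact ENNReal.tsum_sigma (fun n k => ENNReal.ofReal (μ (G j n k)))
  have perN : ∀ n : ℕ, ∑ j : Fin N, ∑' k : κ j n, ENNReal.ofReal (μ (G j n k)) ≤
      fv S μ (f n) := by
    intro n
    haveI : ∀ j, Countable (κ j n) := fun j => cnt j n
    have hre : ∑ j : Fin N, ∑' k : κ j n, ENNReal.ofReal (μ (G j n k)) =
        ∑' q : Σ j : Fin N, κ j n, ENNReal.ofReal (μ (G q.1 n q.2)) := by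
      rw [ENNReal.tsum_sigma (fun j k => ENNReal.ofReal (μ (G j n k))), tsum_fintype]
    rw [hre]
    refine tsum_ofReal_le_fv (fun q => hGS q.1 n q.2) (fun q => ?_) ?_
    · exact (hGsub q.1 n q.2).trans (Set.inter_subset_right.trans (disjointed_le f n))
    · rintro ⟨j, k⟩ ⟨j', k'⟩ hne
      rcases eq_or_ne j j' with rfl | hjj
      · have hkk : k ≠ k' := fun h => hne (by rw [h])
        exact hGd j n hkk
      · exact (hBd hjj).mono ((hGsub j n k).trans Set.inter_subset_left)
          ((hGsub j' n k').trans Set.inter_subset_left)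
  calc ∑ j, ENNReal.ofReal (μ (B j))
      ≤ ∑ j : Fin N, ∑' n : ℕ, ∑' k : κ j n, ENNReal.ofReal (μ (G j n k)) :=
        Finset.sum_le_sum fun j _ => hj j
    _ = ∑' n : ℕ, ∑ j : Fin N, ∑' k : κ j n, ENNReal.ofReal (μ (G j n k)) :=
        (Summable.tsum_finsetSum fun i _ => ENNReal.summable).symm
    _ ≤ ∑' n, fv S μ (f n) := ENNReal.tsum_le_tsum perN

end
section
open Set MeasureTheory
variable {X : Type*} {S : Set (Set X)} {μ : Set X → ℝ}

theorem Dec.diff_fin' (hS : IsIntervalSystem S) {A : Set X} (hA : Dec S A) {n : ℕ}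
    (B : Fin n → Set X) (hB : ∀ k, B k ∈ S) : Dec S (A \ ⋃ k, B k) := by
  classical
  have h := hA.diff_fin hS n (fun m => if h : m < n then B ⟨m, h⟩ else ∅)
    (fun m => by by_cases h : m < n <;> simp [h, hB])
  have he : (⋃ k : Fin n, (fun m => if h : m < n then B ⟨m, h⟩ else ∅) k.1) = ⋃ k, B k :=
    Set.iUnion_congr fun k => by simp [k.2]
  rwa [he] at h

theorem fv_eq_posVar (hS : IsIntervalSystem S) (hμ : IsAddMeasure S μ) {A : Set X}
    (hA : A ∈ S) : fv S μ A = posVar S μ A := by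
  refine le_antisymm (iSup_le fun p => ?_) (sSup_le ?_)
  · obtain ⟨⟨n, B⟩, hBS, hBA, hBd⟩ := p
    obtain ⟨ι₁, cnt1, R, hRS, hRd, hRu⟩ := (dec_of_mem hA).diff_fin' hS B hBS
    have hBu : (⋃ j, B j) ⊆ A := Set.iUnion_subset hBA
    have hRsub : ∀ i, R i ⊆ A \ ⋃ j, B j := fun i => hRu ▸ Set.subset_iUnion _ i
    have hcross : ∀ (j : Fin n) (i : ι₁), Disjoint (B j) (R i) := by
      intro j i
      rw [Set.disjoint_left]
      intro x hxB hxR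
      exact ((hRsub i) hxR).2 (Set.mem_iUnion.mpr ⟨j, hxB⟩)
    have hmem : (∑' q : Fin n ⊕ ι₁, ENNReal.ofReal (μ (Sum.elim B R q))) ∈
        {s : ℝ≥0∞ | ∃ (ι : Type) (_ : Countable ι) (B : ι → Set X), (∀ i, B i ∈ S) ∧
          (Pairwise fun i j => Disjoint (B i) (B j)) ∧ (⋃ i, B i) = A ∧
          s = ∑' i, ENNReal.ofReal (μ (B i))} := by
      refine ⟨Fin n ⊕ ι₁, inferInstance, Sum.elim B R, ?_, ?_, ?_, rfl⟩
      · rintro (j | i)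
        · exact hBS j
        · exact hRS i
      · rintro (j | i) (j' | i') hne
        · exact hBd fun h => hne (by rw [h])
        · exact hcross j i'
        · exact (hcross j' i).symm
        · refine hRd fun h => hne (by rw [h])
      · rw [Set.iUnion_sum]
        simp only [Sum.elim_inl, Sum.elim_inr]
        rw [hRu, Set.union_diff_cancel hBu]
    refine le_trans ?_ (le_sSup hmem)
    rw [tsum_sum_type]
    simp only [Sum.elim_inl, Sum.elim_inr]
    rw [tsum_fintype]
    exact le_self_add
  · rintro s ⟨ι₀, cnt, B, hBS, hBd, hBu, rfl⟩
    exact tsum_ofReal_le_fv hBS (fun i => hBu ▸ Set.subset_iUnion _ i) hBd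

open scoped Classical in
/-- The gauge used to generate the outer measure. -/
noncomputable def m0 (S : Set (Set X)) (μ : Set X → ℝ) : Set X → ℝ≥0∞ := fun A =>
  if A = ∅ then 0 else if A ∈ S then fv S μ A else ⊤

theorem m0_empty : m0 S μ (∅ : Set X) = 0 := by simp [m0]

theorem m0_eq_fv (hμ : IsAddMeasure S μ) {A : Set X} (h : A ∈ S ∨ A = ∅) :
    m0 S μ A = fv S μ A := by
  rcases eq_or_ne A ∅ with rfl | hne
  · rw [m0_empty, fv_empty hμ]
  · have hA : A ∈ S := h.resolve_right hne
    simp [m0, hne, hA]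

/-- The outer measure generated by `fv` on `S`. -/
noncomputable def OM (S : Set (Set X)) (μ : Set X → ℝ) : OuterMeasure X :=
  OuterMeasure.ofFunction (m0 S μ) m0_empty

theorem OM_le (A : Set X) : OM S μ A ≤ m0 S μ A :=
  OuterMeasure.ofFunction_le _

theorem m0_top {A : Set X} (h1 : A ∉ S) (h2 : A ≠ ∅) : m0 S μ A = ⊤ := by
  simp [m0, h1, h2]

theorem OM_eq (hS : IsIntervalSystem S) (hμ : IsAddMeasure S μ) {A : Set X}
    (hA : A ∈ S ∨ A = ∅) : OM S μ A = fv S μ A := by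
  refine le_antisymm ((OM_le A).trans_eq (m0_eq_fv hμ hA)) ?_
  refine le_iInf fun t => le_iInf fun ht => ?_
  by_cases hgood : ∀ n, t n ∈ S ∨ t n = ∅
  · calc fv S μ A ≤ ∑' n, fv S μ (t n) := fv_subadd hS hμ hgood ht
      _ = ∑' n, m0 S μ (t n) := tsum_congr fun n => (m0_eq_fv hμ (hgood n)).symm
  · obtain ⟨n, hn⟩ := not_forall.mp hgood
    rw [not_or] at hn
    exact le_top.trans_eq (ENNReal.tsum_eq_top_of_eq_top ⟨n, m0_top hn.1 hn.2⟩).symm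

theorem OM_caratheodory (hS : IsIntervalSystem S) (hμ : IsAddMeasure S μ) {B : Set X}
    (hB : B ∈ S) : MeasurableSet[(OM S μ).caratheodory] B := by
  rw [OuterMeasure.isCaratheodory_iff_le]
  intro T
  refine le_trans ?_ (le_refl (OM S μ T))
  show OM S μ (T ∩ B) + OM S μ (T \ B) ≤ OM S μ T
  have : OM S μ T = ⨅ (t : ℕ → Set X) (_ : T ⊆ ⋃ n, t n), ∑' n, m0 S μ (t n) :=
    OuterMeasure.ofFunction_apply _ _ _
  rw [this]
  refine le_iInf fun t => le_iInf fun ht => ?_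
  by_cases hgood : ∀ n, t n ∈ S ∨ t n = ∅
  case neg =>
    obtain ⟨n, hn⟩ := not_forall.mp hgood
    rw [not_or] at hn
    exact le_top.trans_eq (ENNReal.tsum_eq_top_of_eq_top ⟨n, m0_top hn.1 hn.2⟩).symm
  have hn : ∀ n, OM S μ (t n ∩ B) + OM S μ (t n \ B) ≤ fv S μ (t n) := by
    intro n
    rcases hgood n with htn | htn
    · obtain ⟨ι₁, cnt1, G1, hG1S, hG1d, hG1u⟩ := dec_of_set (hS _ htn _ hB).2
      obtain ⟨ι₂, cnt2, G2, hG2S, hG2d, hG2u⟩ := dec_of_set (hS _ htn _ hB).1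
      have hb1 : OM S μ (t n ∩ B) ≤ ∑' i, fv S μ (G1 i) := by
        rw [← hG1u]
        exact (measure_iUnion_le _).trans (ENNReal.tsum_le_tsum fun i =>
          (OM_le _).trans_eq (m0_eq_fv hμ (Or.inl (hG1S i))))
      have hb2 : OM S μ (t n \ B) ≤ ∑' i, fv S μ (G2 i) := by
        rw [← hG2u]
        exact (measure_iUnion_le _).trans (ENNReal.tsum_le_tsum fun i =>
          (OM_le _).trans_eq (m0_eq_fv hμ (Or.inl (hG2S i))))
      have hG1sub : ∀ i, G1 i ⊆ t n ∩ B := fun i => hG1u ▸ Set.subset_iUnion _ i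
      have hG2sub : ∀ i, G2 i ⊆ t n \ B := fun i => hG2u ▸ Set.subset_iUnion _ i
      calc OM S μ (t n ∩ B) + OM S μ (t n \ B) ≤
            (∑' i, fv S μ (G1 i)) + ∑' i, fv S μ (G2 i) := add_le_add hb1 hb2
        _ = ∑' q : ι₁ ⊕ ι₂, fv S μ (Sum.elim G1 G2 q) := by
            rw [tsum_sum_type]
            simp only [Sum.elim_inl, Sum.elim_inr]
        _ ≤ fv S μ (t n) := by
            refine tsum_fv_le ?_ ?_
            · rintro (i | i) (i' | i') hne
              · exact hG1d fun h => hne (by rw [h])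
              · exact (Set.disjoint_of_subset (hG1sub i) (hG2sub i'))
                  (disjoint_sdiff_right.mono_left Set.inter_subset_right)
              · exact (Set.disjoint_of_subset (hG2sub i) (hG1sub i'))
                  (disjoint_sdiff_left.mono_right Set.inter_subset_right)
              · exact hG2d fun h => hne (by rw [h])
            · rintro (i | i)
              · exact (hG1sub i).trans Set.inter_subset_left
              · exact (hG2sub i).trans Set.diff_subset
    · have h1 : t n ∩ B = ∅ := by rw [htn]; simp
      have h2 : t n \ B = ∅ := by rw [htn]; simp
      rw [h1, h2]
      simp
  calc OM S μ (T ∩ B) + OM S μ (T \ B)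
      ≤ (∑' n, OM S μ (t n ∩ B)) + ∑' n, OM S μ (t n \ B) := by
        refine add_le_add ?_ ?_
        · refine le_trans (measure_mono ?_) (measure_iUnion_le _)
          rw [← Set.iUnion_inter]
          exact Set.inter_subset_inter_left _ ht
        · refine le_trans (measure_mono ?_) (measure_iUnion_le _)
          rw [← Set.iUnion_diff]
          exact Set.diff_subset_diff_left ht
    _ = ∑' n, (OM S μ (t n ∩ B) + OM S μ (t n \ B)) := ENNReal.tsum_add.symm
    _ ≤ ∑' n, fv S μ (t n) := ENNReal.tsum_le_tsum hn
    _ = ∑' n, m0 S μ (t n) := tsum_congr fun n => (m0_eq_fv hμ (hgood n)).symm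

theorem key (hS : IsIntervalSystem S) (hμ : IsAddMeasure S μ) {σ : Type*} [Countable σ]
    (e e' : σ → ℝ≥0∞) (E : σ → Set X) (hE : ∀ k, E k ∈ S)
    (hpt : ∀ x, ∑' k, (E k).indicator (fun _ => e k) x =
      ∑' k, (E k).indicator (fun _ => e' k) x) :
    ∑' k, e k * posVar S μ (E k) = ∑' k, e' k * posVar S μ (E k) := by
  letI MS : MeasurableSpace X := (OM S μ).caratheodory
  set m : Measure X := (OM S μ).toMeasure le_rfl with hm
  have hmeas : ∀ k, MeasurableSet (E k) := fun k => OM_caratheodory hS hμ (hE k)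
  have hval : ∀ k, m (E k) = posVar S μ (E k) := by
    intro k
    rw [hm, MeasureTheory.toMeasure_apply _ _ (hmeas k), OM_eq hS hμ (Or.inl (hE k)),
      fv_eq_posVar hS hμ (hE k)]
  calc ∑' k, e k * posVar S μ (E k)
      = ∑' k, ∫⁻ x, (E k).indicator (fun _ => e k) x ∂m := by
        refine tsum_congr fun k => ?_
        rw [lintegral_indicator_const (hmeas k), hval k]
    _ = ∫⁻ x, ∑' k, (E k).indicator (fun _ => e k) x ∂m :=
        (lintegral_tsum fun k => (measurable_const.indicator (hmeas k)).aemeasurable).symm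
    _ = ∫⁻ x, ∑' k, (E k).indicator (fun _ => e' k) x ∂m := lintegral_congr fun x => hpt x
    _ = ∑' k, ∫⁻ x, (E k).indicator (fun _ => e' k) x ∂m :=
        lintegral_tsum fun k => (measurable_const.indicator (hmeas k)).aemeasurable
    _ = ∑' k, e' k * posVar S μ (E k) := by
        refine tsum_congr fun k => ?_
        rw [lintegral_indicator_const (hmeas k), hval k]

end
section
open Set
variable {X : Type*}

theorem top_sub_ennreal {n : ℝ≥0∞} (hn : n ≠ ⊤) : (⊤ : EReal) - (n : EReal) = ⊤ := by
  rw [sub_eq_add_neg, EReal.top_add_of_ne_bot]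
  rw [ne_eq, EReal.neg_eq_bot_iff, EReal.coe_ennreal_eq_top_iff]
  exact hn

theorem ennreal_sub_lt_top {a : ℝ≥0∞} (b : ℝ≥0∞) (ha : a ≠ ⊤) :
    (a : EReal) - (b : EReal) < ⊤ := by
  have h1 : (a : EReal) - (b : EReal) ≤ (a : EReal) := by
    rw [sub_eq_add_neg]
    calc (a : EReal) + (-(b : EReal)) ≤ (a : EReal) + 0 := by
          refine add_le_add le_rfl ?_
          have h0 : -(b : EReal) ≤ -0 := EReal.neg_le_neg_iff.mpr (EReal.coe_ennreal_nonneg b)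
          simpa using h0
      _ = (a : EReal) := add_zero _
  refine h1.trans_lt ?_
  rw [lt_top_iff_ne_top, ne_eq, EReal.coe_ennreal_eq_top_iff]
  exact ha

theorem ennreal_sub_ne_bot {a b : ℝ≥0∞} (hb : b ≠ ⊤) :
    (a : EReal) - (b : EReal) ≠ ⊥ := by
  rw [sub_eq_add_neg, ne_eq, EReal.add_eq_bot_iff]
  push_neg
  constructor
  · exact EReal.coe_ennreal_ne_bot a
  · rw [ne_eq, EReal.neg_eq_bot_iff, EReal.coe_ennreal_eq_top_iff]
    exact hb

theorem coe_sub_finite {a b : ℝ≥0∞} (ha : a ≠ ⊤) (hb : b ≠ ⊤) :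
    (a : EReal) - (b : EReal) = ((a.toReal - b.toReal : ℝ) : EReal) := by
  have h : ∀ {x : ℝ≥0∞}, x ≠ ⊤ → (x : EReal) = ((x.toReal : ℝ) : EReal) := by
    intro x hx
    rw [← EReal.toReal_coe_ennreal (x := x)]
    refine (EReal.coe_toReal ?_ ?_).symm
    · rw [ne_eq, EReal.coe_ennreal_eq_top_iff]; exact hx
    · exact EReal.coe_ennreal_ne_bot x
  rw [h ha, h hb, ← EReal.coe_sub]

theorem enn_balance {p n p' n' : ℝ≥0∞}
    (h : (p ≠ ⊤ ∨ n ≠ ⊤) → (p' ≠ ⊤ ∨ n' ≠ ⊤) →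
      (p : EReal) - (n : EReal) = (p' : EReal) - (n' : EReal)) :
    p + n' = n + p' := by
  by_cases hpn : p = ⊤ ∧ n = ⊤
  · rw [hpn.1, hpn.2, top_add, top_add]
  by_cases hpn' : p' = ⊤ ∧ n' = ⊤
  · rw [hpn'.1, hpn'.2, add_top, add_top]
  rw [not_and_or, ← ne_eq, ← ne_eq] at hpn hpn'
  have heq := h hpn hpn'
  by_cases hp : p = ⊤
  · have hn : n ≠ ⊤ := hpn.resolve_left (not_not_intro hp)
    rw [hp, EReal.coe_ennreal_top, top_sub_ennreal hn] at heq
    have hp' : p' = ⊤ := by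
      by_contra hp'
      exact absurd heq.symm (ne_of_lt (ennreal_sub_lt_top _ hp'))
    have hn' : n' ≠ ⊤ := hpn'.resolve_left (not_not_intro hp')
    rw [hp, hp', top_add, add_top]
  by_cases hn : n = ⊤
  · rw [hn, EReal.coe_ennreal_top, EReal.sub_top] at heq
    have hn' : n' = ⊤ := by
      by_contra hn'
      exact ennreal_sub_ne_bot hn' heq.symm
    rw [hn, hn', top_add, add_top]
  by_cases hp' : p' = ⊤
  · have hn' : n' ≠ ⊤ := hpn'.resolve_left (not_not_intro hp')
    rw [hp', EReal.coe_ennreal_top, top_sub_ennreal hn'] at heq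
    exact absurd heq (ne_of_lt (ennreal_sub_lt_top _ hp))
  by_cases hn' : n' = ⊤
  · rw [hn', EReal.coe_ennreal_top, EReal.sub_top] at heq
    exact absurd heq (ennreal_sub_ne_bot hn)
  rw [coe_sub_finite hp hn, coe_sub_finite hp' hn', EReal.coe_eq_coe_iff] at heq
  have hr : p.toReal + n'.toReal = n.toReal + p'.toReal := by linarith
  calc p + n' = ENNReal.ofReal p.toReal + ENNReal.ofReal n'.toReal := by
        rw [ENNReal.ofReal_toReal hp, ENNReal.ofReal_toReal hn']
    _ = ENNReal.ofReal (p.toReal + n'.toReal) :=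
        (ENNReal.ofReal_add ENNReal.toReal_nonneg ENNReal.toReal_nonneg).symm
    _ = ENNReal.ofReal (n.toReal + p'.toReal) := by rw [hr]
    _ = n + p' := by
        rw [ENNReal.ofReal_add ENNReal.toReal_nonneg ENNReal.toReal_nonneg,
          ENNReal.ofReal_toReal hn, ENNReal.ofReal_toReal hp']

theorem ereal_sub_consistent {a b a' b' : ℝ≥0∞} (h : a + b' = b + a')
    (hc : ¬(a = ⊤ ∧ b = ⊤)) (hd : ¬(a' = ⊤ ∧ b' = ⊤)) :
    (a : EReal) - (b : EReal) = (a' : EReal) - (b' : EReal) := by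
  rw [not_and_or, ← ne_eq, ← ne_eq] at hc hd
  by_cases ha : a = ⊤
  · have hb : b ≠ ⊤ := hc.resolve_left (not_not_intro ha)
    have ha' : a' = ⊤ := by
      rw [ha, top_add] at h
      rcases ENNReal.add_eq_top.mp h.symm with h1 | h1
      · exact absurd h1 hb
      · exact h1
    have hb' : b' ≠ ⊤ := hd.resolve_left (not_not_intro ha')
    rw [ha, ha', EReal.coe_ennreal_top, top_sub_ennreal hb, top_sub_ennreal hb']
  by_cases hb : b = ⊤
  · have hb' : b' = ⊤ := by
      rw [hb, top_add] at h
      rcases ENNReal.add_eq_top.mp h with h1 | h1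
      · exact absurd h1 ha
      · exact h1
    rw [hb, hb', EReal.coe_ennreal_top, EReal.sub_top, EReal.sub_top]
  have ha' : a' ≠ ⊤ := by
    intro ha'
    rw [ha', add_top] at h
    rcases ENNReal.add_eq_top.mp h with h1 | h1
    · exact absurd h1 ha
    · exact (hd.resolve_left (not_not_intro ha')) h1
  have hb' : b' ≠ ⊤ := by
    intro hb'
    rw [hb', add_top] at h
    rcases ENNReal.add_eq_top.mp h.symm with h1 | h1
    · exact absurd h1 hb
    · exact ha' h1
  rw [coe_sub_finite ha hb, coe_sub_finite ha' hb', EReal.coe_eq_coe_iff]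
  have hfin1 : a + b' ≠ ⊤ := by
    rw [ne_eq, ENNReal.add_eq_top, not_or]; exact ⟨ha, hb'⟩
  have hfin2 : b + a' ≠ ⊤ := by
    rw [ne_eq, ENNReal.add_eq_top, not_or]; exact ⟨hb, ha'⟩
  have := congrArg ENNReal.toReal h
  rw [ENNReal.toReal_add ha hb', ENNReal.toReal_add hb ha'] at this
  linarith

end

end St18

/-- (Consistency of the Lebesgue–Riesz integral.) Let `μ : S → ℝ` be a locally
bounded measure on an interval system `S`. Suppose `𝖢 = (c i, C i)` and `𝖣 = (d j, D j)` are
countable formal sums such that (i) at every point where for each of them `P` or `N` is finite,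
the extended real numbers `P - N` agree, and (ii) for each of them `I⁺` and `I⁻` are not both
infinite. Then `I⁺(𝖢) - I⁻(𝖢) = I⁺(𝖣) - I⁻(𝖣)` as extended real numbers. -/
theorem statement18 {X : Type*} (S : Set (Set X)) (hS : IsIntervalSystem S)
    (μ : Set X → ℝ) (hμ : IsAddMeasure S μ)
    (hbd : ∀ A ∈ S, Bornology.IsBounded (finDisjSums S μ A))
    (ι κ : Type*) [Countable ι] [Countable κ]
    (c : ι → ℝ) (C : ι → Set X) (hC : ∀ i, C i ∈ S)
    (d : κ → ℝ) (D : κ → Set X) (hD : ∀ j, D j ∈ S)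
    (hpt : ∀ x : X,
      ((formalP c C x ≠ ⊤ ∨ formalN c C x ≠ ⊤) ∧ (formalP d D x ≠ ⊤ ∨ formalN d D x ≠ ⊤)) →
      (formalP c C x : EReal) - (formalN c C x : EReal) =
        (formalP d D x : EReal) - (formalN d D x : EReal))
    (hc : ¬(formalIpos S μ c C = ⊤ ∧ formalIneg S μ c C = ⊤))
    (hd : ¬(formalIpos S μ d D = ⊤ ∧ formalIneg S μ d D = ⊤)) :
    (formalIpos S μ c C : EReal) - (formalIneg S μ c C : EReal) =
      (formalIpos S μ d D : EReal) - (formalIneg S μ d D : EReal) := by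
  classical
  -- pointwise balance
  have hP : ∀ x : X, formalP c C x + formalN d D x = formalN c C x + formalP d D x :=
    fun x => St18.enn_balance (fun h1 h2 => hpt x ⟨h1, h2⟩)
  -- the measure `-μ`
  have hμneg : IsAddMeasure S (fun A => -μ A) :=
    fun ι' A B hcnt hB hA hdis hu => (hμ ι' A B hcnt hB hA hdis hu).neg
  have hnegVar : negVar S μ = posVar S (fun A => -μ A) := rfl
  set E : ι ⊕ κ → Set X := Sum.elim C D with hE
  have hES : ∀ k, E k ∈ S := by rintro (i | j); exacts [hC i, hD j]
  -- the ν-identity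
  have hptν : ∀ x : X, ∑' k : ι ⊕ κ, (E k).indicator
        (fun _ => Sum.elim (fun i => ENNReal.ofReal (c i)) (fun j => ENNReal.ofReal (-d j)) k) x =
      ∑' k : ι ⊕ κ, (E k).indicator
        (fun _ => Sum.elim (fun i => ENNReal.ofReal (-c i)) (fun j => ENNReal.ofReal (d j)) k) x := by
    intro x
    rw [St18.tsum_sum_type, St18.tsum_sum_type]
    simp only [hE, Sum.elim_inl, Sum.elim_inr]
    exact hP x
  have hkeyν := St18.key hS hμ
      (Sum.elim (fun i => ENNReal.ofReal (c i)) (fun j => ENNReal.ofReal (-d j)))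
      (Sum.elim (fun i => ENNReal.ofReal (-c i)) (fun j => ENNReal.ofReal (d j)))
      E hES hptν
  -- the λ-identity
  have hptL : ∀ x : X, ∑' k : ι ⊕ κ, (E k).indicator
        (fun _ => Sum.elim (fun i => ENNReal.ofReal (-c i)) (fun j => ENNReal.ofReal (d j)) k) x =
      ∑' k : ι ⊕ κ, (E k).indicator
        (fun _ => Sum.elim (fun i => ENNReal.ofReal (c i)) (fun j => ENNReal.ofReal (-d j)) k) x := by
    intro x
    rw [St18.tsum_sum_type, St18.tsum_sum_type]
    simp only [hE, Sum.elim_inl, Sum.elim_inr]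
    exact (hP x).symm
  have hkeyL := St18.key hS hμneg
      (Sum.elim (fun i => ENNReal.ofReal (-c i)) (fun j => ENNReal.ofReal (d j)))
      (Sum.elim (fun i => ENNReal.ofReal (c i)) (fun j => ENNReal.ofReal (-d j)))
      E hES hptL
  rw [St18.tsum_sum_type, St18.tsum_sum_type] at hkeyν hkeyL
  simp only [hE, Sum.elim_inl, Sum.elim_inr] at hkeyν hkeyL
  rw [← hnegVar] at hkeyL
  -- split the integrals
  have split1 : formalIpos S μ c C = (∑' i, ENNReal.ofReal (c i) * posVar S μ (C i)) +
      ∑' i, ENNReal.ofReal (-c i) * negVar S μ (C i) := ENNReal.tsum_add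
  have split2 : formalIneg S μ c C = (∑' i, ENNReal.ofReal (-c i) * posVar S μ (C i)) +
      ∑' i, ENNReal.ofReal (c i) * negVar S μ (C i) := ENNReal.tsum_add
  have split3 : formalIpos S μ d D = (∑' j, ENNReal.ofReal (d j) * posVar S μ (D j)) +
      ∑' j, ENNReal.ofReal (-d j) * negVar S μ (D j) := ENNReal.tsum_add
  have split4 : formalIneg S μ d D = (∑' j, ENNReal.ofReal (-d j) * posVar S μ (D j)) +
      ∑' j, ENNReal.ofReal (d j) * negVar S μ (D j) := ENNReal.tsum_add
  refine St18.ereal_sub_consistent ?_ hc hd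
  rw [split1, split2, split3, split4]
  calc (∑' i, ENNReal.ofReal (c i) * posVar S μ (C i)) +
        (∑' i, ENNReal.ofReal (-c i) * negVar S μ (C i)) +
        ((∑' j, ENNReal.ofReal (-d j) * posVar S μ (D j)) +
         ∑' j, ENNReal.ofReal (d j) * negVar S μ (D j))
      = ((∑' i, ENNReal.ofReal (c i) * posVar S μ (C i)) +
         ∑' j, ENNReal.ofReal (-d j) * posVar S μ (D j)) +
        ((∑' i, ENNReal.ofReal (-c i) * negVar S μ (C i)) +
         ∑' j, ENNReal.ofReal (d j) * negVar S μ (D j)) := by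
        exact add_add_add_comm _ _ _ _
    _ = ((∑' i, ENNReal.ofReal (-c i) * posVar S μ (C i)) +
         ∑' j, ENNReal.ofReal (d j) * posVar S μ (D j)) +
        ((∑' i, ENNReal.ofReal (c i) * negVar S μ (C i)) +
         ∑' j, ENNReal.ofReal (-d j) * negVar S μ (D j)) := by
        rw [hkeyν, hkeyL]
    _ = (∑' i, ENNReal.ofReal (-c i) * posVar S μ (C i)) +
        (∑' i, ENNReal.ofReal (c i) * negVar S μ (C i)) +
        ((∑' j, ENNReal.ofReal (d j) * posVar S μ (D j)) +
         ∑' j, ENNReal.ofReal (-d j) * negVar S μ (D j)) := by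
        exact add_add_add_comm _ _ _ _
end
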